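/- arXiv:1906.00503 — 5 statements merged into one kernel-verified Lean document; each statement's English description precedes it below -/
import Mathlib

section
/- Let n ≥ 1, let Ω = diag(ω₁, …, ωₙ) be a real diagonal matrix with ωᵢ > 0 for all i, and let 0 < p < 1. For every symmetric positive semidefinite D̃ ∈ ℝ^{n×n} such that Ã(D̃) is stable, the unique solution X of the Lyapunov equation Ã(D̃)X + XÃ(D̃)ᵀ = −diag(p·Iₙ, Iₙ) satisfies Tr(X) ≥ √(2p(1+p))·∑_{i=1}^n ωᵢ^{-1}; moreover the matrix D̃* = √(2(1+p)/p)·Ω is symmetric positive semidefinite with Ã(D̃*) stable, the corresponding solution X* satisfies Tr(X*) = √(2p(1+p))·∑_{i=1}^n ωᵢ^{-1}, and if any feasible D̃ attains this value then D̃ = D̃*. In other words, the optimization problem 'minimize √Tr(X) subject to Ã(D̃)X + XÃ(D̃)ᵀ = −diag(pI, I) over symmetric positive semidefinite D̃ with Ã(D̃) stable' has a unique global minimizer, attained at D̃ = √(2(1+p)/p)·Ω. -/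
open Matrix

/-- A real square matrix is stable if every eigenvalue (as a complex matrix)
has negative real part. -/
def Matrix.IsStable {n : Type*} [Fintype n] [DecidableEq n] (A : Matrix n n ℝ) : Prop :=
  ∀ z ∈ spectrum ℂ (A.map (Complex.ofReal · )), z.re < 0

/-- The block matrix Ã(D̃) = [[0, Ω], [−Ω, −D̃]]. -/
def Atilde {n : ℕ} (ω : Fin n → ℝ) (D : Matrix (Fin n) (Fin n) ℝ) :
    Matrix (Fin n ⊕ Fin n) (Fin n ⊕ Fin n) ℝ :=
  Matrix.fromBlocks 0 (Matrix.diagonal ω) (-(Matrix.diagonal ω)) (-D)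

/-!
Let `S = [[P, B], [Bᵀ, E]]` be the symmetric part of `X` and `K = BΩ + (p/2)I`. The `(1,1)` block
of the Lyapunov equation says that `K` is skew-symmetric, and the other blocks give
`Tr X = 2 Tr E + (p/2) Tr(Ω⁻¹DΩ⁻¹)`, `Tr(Ω⁻¹DE) = (1+p)/2 · ∑ ωᵢ⁻¹` and
`Tr(EDE) = (1+p)/2 · Tr E - Tr(KᵀKΩ⁻¹DΩ⁻¹)`. Cauchy–Schwarz for the semi-inner product
`⟨M, N⟩ = Tr(MᵀDN)` applied to `Ω⁻¹` and `E`, followed by AM–GM, gives the lower bound.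

For `D = cΩ` the trace is `((1+p)/c + pc/2) ∑ ωᵢ⁻¹`, which equals the bound exactly when
`c = √(2(1+p)/p)`; this `D` is positive definite, which makes `Ã(D)` stable (the energy `‖u‖²`
strictly decreases along `u' = Ã(D)u`). Conversely, equality in the bound forces `KΩ⁻¹D = 0` and
equality in Cauchy–Schwarz, i.e. `D(E - μΩ⁻¹) = 0`, where `E - μΩ⁻¹` commutes with `Ω`. A nonzero
column `v` of `E - μΩ⁻¹` would be an eigenvector of `Ω` in the kernel of `D`, making `(v, iv)` an
eigenvector of `Ã(D)` with imaginary eigenvalue, so stability gives `E = μΩ⁻¹`. The remaining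
block equation then reads `μD = KΩ - ΩK + (1+p)/2 · Ω`, and `KΩ⁻¹D = 0` forces `KΩ = ΩK`, so `D`
is a multiple of `Ω`.
-/

namespace Matrix

lemma mem_spectrum_iff_exists_mulVec_eq_smul {K m : Type*} [Field K] [Fintype m] [DecidableEq m]
    (M : Matrix m m K) (z : K) : z ∈ spectrum K M ↔ ∃ v ≠ 0, M *ᵥ v = z • v := by
  rw [← spectrum_toLin', ← Module.End.hasEigenvalue_iff_mem_spectrum]
  constructor
  · intro h
    obtain ⟨v, hv⟩ := h.exists_hasEigenvector
    exact ⟨v, hv.2, by simpa using hv.apply_eq_smul⟩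
  · rintro ⟨v, hv0, hv⟩
    exact Module.End.hasEigenvalue_of_hasEigenvector
      (Module.End.hasEigenvector_iff.mpr ⟨by simpa [Module.End.mem_eigenspace_iff] using hv, hv0⟩)

lemma trace_fromBlocks {l m R : Type*} [Fintype l] [Fintype m] [AddCommMonoid R]
    (A : Matrix l l R) (B : Matrix l m R) (C : Matrix m l R) (D : Matrix m m R) :
    (fromBlocks A B C D).trace = A.trace + D.trace := by
  simp [trace, Fintype.sum_sum_type]

lemma PosSemidef.transpose_eq {m : Type*} {D : Matrix m m ℝ} (hD : D.PosSemidef) : Dᵀ = D :=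
  (isHermitian_iff_isSymm.mp hD.isHermitian).eq

variable {m : Type*} [Fintype m]

lemma re_star_dotProduct_map_ofReal_mulVec (D : Matrix m m ℝ) (y : m → ℂ) :
    (star y ⬝ᵥ D.map (↑) *ᵥ y).re =
      (fun i => (y i).re) ⬝ᵥ D *ᵥ (fun i => (y i).re) +
        (fun i => (y i).im) ⬝ᵥ D *ᵥ (fun i => (y i).im) := by
  simp only [dotProduct, mulVec, Complex.re_sum, Finset.mul_sum, ← Finset.sum_add_distrib]
  refine Finset.sum_congr rfl fun i _ => Finset.sum_congr rfl fun j _ => ?_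
  simp

lemma PosDef.re_star_dotProduct_map_ofReal_mulVec_pos {D : Matrix m m ℝ} (hD : D.PosDef)
    {y : m → ℂ} (hy : y ≠ 0) : 0 < (star y ⬝ᵥ D.map (↑) *ᵥ y).re := by
  rw [re_star_dotProduct_map_ofReal_mulVec]
  have hnonneg (v : m → ℝ) : 0 ≤ v ⬝ᵥ D *ᵥ v := by
    simpa using hD.posSemidef.dotProduct_mulVec_nonneg v
  by_cases hre : (fun i => (y i).re) = 0
  · have him : (fun i => (y i).im) ≠ 0 := fun him =>
      hy (funext fun i => Complex.ext (congrFun hre i) (congrFun him i))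
    have := hD.dotProduct_mulVec_pos him
    simp only [star_trivial] at this
    linarith [hnonneg fun i => (y i).re]
  · have := hD.dotProduct_mulVec_pos hre
    simp only [star_trivial] at this
    linarith [hnonneg fun i => (y i).im]

lemma trace_mul_eq_zero_of_transpose_eq_neg {K N : Matrix m m ℝ} (hK : Kᵀ = -K) (hN : Nᵀ = N) :
    (K * N).trace = 0 := by
  have h := trace_transpose (K * N)
  rw [transpose_mul, hK, hN, Matrix.mul_neg, trace_neg, trace_mul_comm] at h
  linarith

lemma lyapunov_half_add_transpose {A X W : Matrix m m ℝ} (hW : Wᵀ = W)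
    (h : A * X + X * Aᵀ = -W) :
    A * ((2⁻¹ : ℝ) • (X + Xᵀ)) + ((2⁻¹ : ℝ) • (X + Xᵀ)) * Aᵀ = -W := by
  have hT := congrArg transpose h
  rw [transpose_add, transpose_mul, transpose_mul, transpose_transpose, transpose_neg, hW] at hT
  linear_combination (norm := skip) (2⁻¹ : ℝ) • (h + hT)
  simp only [Matrix.mul_add, Matrix.add_mul, Matrix.smul_mul, Matrix.mul_smul]
  module

section TraceForm

variable {D : Matrix m m ℝ}

lemma trace_transpose_mul_mul_comm (hD : Dᵀ = D) (M N : Matrix m m ℝ) :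
    (Nᵀ * D * M).trace = (Mᵀ * D * N).trace := by
  rw [← trace_transpose, transpose_mul, transpose_mul, transpose_transpose, hD, Matrix.mul_assoc]

lemma trace_transpose_mul_mul_sub_smul (hD : Dᵀ = D) (M N : Matrix m m ℝ) (t : ℝ) :
    ((N - t • M)ᵀ * D * (N - t • M)).trace =
      (Nᵀ * D * N).trace - 2 * t * (Mᵀ * D * N).trace + t ^ 2 * (Mᵀ * D * M).trace := by
  have h := trace_transpose_mul_mul_comm hD M N
  simp only [transpose_sub, transpose_smul, Matrix.sub_mul, Matrix.mul_sub, smul_mul_assoc,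
    mul_smul_comm, trace_sub, trace_smul, smul_eq_mul, h]
  ring

lemma trace_transpose_mul_self_mul_conj {Ωi : Matrix m m ℝ} (hΩi : Ωiᵀ = Ωi)
    (K : Matrix m m ℝ) :
    (Kᵀ * K * (Ωi * D * Ωi)).trace = ((Ωi * Kᵀ)ᵀ * D * (Ωi * Kᵀ)).trace := by
  rw [transpose_mul, transpose_transpose, hΩi]
  simpa only [Matrix.mul_assoc] using trace_mul_comm Kᵀ (K * (Ωi * D * Ωi))

namespace PosSemidef

lemma trace_transpose_mul_mul_nonneg (hD : D.PosSemidef) (M : Matrix m m ℝ) :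
    0 ≤ (Mᵀ * D * M).trace :=
  (hD.conjTranspose_mul_mul_same M).trace_nonneg

open scoped MatrixOrder in
lemma mul_eq_zero_of_trace_transpose_mul_mul_eq_zero [DecidableEq m] (hD : D.PosSemidef)
    {M : Matrix m m ℝ} (h : (Mᵀ * D * M).trace = 0) : D * M = 0 := by
  obtain ⟨B, rfl⟩ := CStarAlgebra.nonneg_iff_eq_star_mul_self.mp hD.nonneg
  rw [star_eq_conjTranspose, conjTranspose_eq_transpose_of_trivial] at h ⊢
  have hBM : ((B * M)ᴴ * (B * M)).trace = 0 := by
    simpa [conjTranspose_eq_transpose_of_trivial, transpose_mul, Matrix.mul_assoc] using h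
  rw [trace_conjTranspose_mul_self_eq_zero_iff] at hBM
  rw [Matrix.mul_assoc, hBM, Matrix.mul_zero]

lemma trace_transpose_mul_mul_sq_le (hD : D.PosSemidef) (M N : Matrix m m ℝ) :
    (Mᵀ * D * N).trace ^ 2 ≤ (Mᵀ * D * M).trace * (Nᵀ * D * N).trace := by
  have hdisc := discrim_le_zero (a := (Mᵀ * D * M).trace) (b := -2 * (Mᵀ * D * N).trace)
    (c := (Nᵀ * D * N).trace) fun t => by
      have := hD.trace_transpose_mul_mul_nonneg (N - t • M)
      rw [trace_transpose_mul_mul_sub_smul hD.transpose_eq] at this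
      linear_combination this
  rw [discrim] at hdisc
  linarith

lemma mul_sub_smul_eq_zero_of_sq_eq [DecidableEq m] (hD : D.PosSemidef) {M N : Matrix m m ℝ}
    (hM : (Mᵀ * D * M).trace ≠ 0)
    (h : (Mᵀ * D * N).trace ^ 2 = (Mᵀ * D * M).trace * (Nᵀ * D * N).trace) :
    D * (N - ((Mᵀ * D * N).trace / (Mᵀ * D * M).trace) • M) = 0 := by
  refine hD.mul_eq_zero_of_trace_transpose_mul_mul_eq_zero ?_
  rw [trace_transpose_mul_mul_sub_smul hD.transpose_eq]
  field_simp
  linear_combination -h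

end PosSemidef

end TraceForm

end Matrix

section Reduction

variable {m : Type*} [Fintype m] {p : ℝ} {Ω Ωi D P B E K : Matrix m m ℝ}

lemma conj_eq_of_mul_eq_zero (hΩi : Ωiᵀ = Ωi) (hD : Dᵀ = D) (hK : Kᵀ = -K)
    (hDK : D * (Ωi * K) = 0)
    (hcomm : Ω * E * Ωi - Ωi * E * Ω = K * (Ωi * D * Ωi) + (Ωi * D * Ωi) * K) :
    Ω * E * Ωi = Ωi * E * Ω := by
  have hKD : K * Ωi * D = 0 := by
    have h := congrArg transpose hDK
    simp only [transpose_mul, hK, hΩi, hD, transpose_zero, Matrix.neg_mul, neg_eq_zero] at h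
    simpa only [Matrix.mul_assoc] using h
  rw [← sub_eq_zero, hcomm, ← Matrix.mul_assoc, ← Matrix.mul_assoc, hKD, Matrix.zero_mul,
    Matrix.mul_assoc, Matrix.mul_assoc, hDK, Matrix.mul_zero, add_zero]

variable [DecidableEq m]

lemma lyapunov_block_identities (hΩ : Ωᵀ = Ω) (hΩi : Ωiᵀ = Ωi) (h1 : Ω * Ωi = 1) (h2 : Ωi * Ω = 1)
    (hD : Dᵀ = D) (hP : Pᵀ = P) (hE : Eᵀ = E) (hK : B * Ω + (p / 2) • 1 = K)
    (h11 : Ω * Bᵀ + B * Ω = -(p • 1)) (h12 : Ω * E = P * Ω + B * D)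
    (h22 : Ω * B + Bᵀ * Ω + D * E + E * D = 1) :
    Kᵀ = -K ∧ P.trace = E.trace + p / 2 * (Ωi * D * Ωi).trace ∧
      D * E + E * D = (1 + p) • 1 - Ω * K * Ωi + Ωi * K * Ω ∧
      Ω * E * Ωi - Ωi * E * Ω = K * (Ωi * D * Ωi) + (Ωi * D * Ωi) * K := by
  have hKs : Kᵀ = -K := by
    subst hK
    rw [transpose_add, transpose_mul, hΩ, transpose_smul, transpose_one]
    linear_combination (norm := skip) h11
    module
  have hB : B = (K - (p / 2) • 1) * Ωi := by
    linear_combination (norm := skip) -(B * h1) + hK * Ωi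
    simp only [Matrix.sub_mul, Matrix.add_mul, Matrix.smul_mul, Matrix.one_mul, Matrix.mul_one,
      Matrix.mul_assoc]
    module
  subst hB
  set N := Ωi * D * Ωi with hN
  have hNT : Nᵀ = N := by rw [hN, transpose_mul, transpose_mul, hΩi, hD, Matrix.mul_assoc]
  have hPK : P = Ω * E * Ωi - K * N + (p / 2) • N := by
    linear_combination (norm := skip) -(P * h1) - h12 * Ωi
    simp only [hN, Matrix.sub_mul, Matrix.add_mul, Matrix.smul_mul, Matrix.one_mul, Matrix.mul_one,
      Matrix.mul_assoc]
    module
  refine ⟨hKs, ?_, ?_, ?_⟩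
  · rw [hPK, trace_add, trace_sub, trace_smul, trace_mul_eq_zero_of_transpose_eq_neg hKs hNT,
      trace_mul_cycle, h2, Matrix.one_mul, smul_eq_mul]
    ring
  · rw [transpose_mul, transpose_sub, hKs, hΩi, transpose_smul, transpose_one] at h22
    linear_combination (norm := skip) h22 + (p / 2) • h1 + (p / 2) • h2
    simp only [Matrix.mul_sub, Matrix.sub_mul, Matrix.neg_mul, Matrix.mul_neg, Matrix.smul_mul,
      Matrix.mul_smul, Matrix.one_mul, Matrix.mul_one, Matrix.mul_assoc]
    module
  · have hPT := congrArg transpose hPK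
    rw [hP, transpose_add, transpose_sub, transpose_smul, transpose_mul, transpose_mul,
      transpose_mul, hNT, hKs, hΩi, hΩ, hE] at hPT
    linear_combination (norm := skip) hPT - hPK
    simp only [Matrix.mul_neg, Matrix.mul_assoc]
    module

lemma trace_mul_mul_eq_of_anticomm (hΩi : Ωiᵀ = Ωi) (h1 : Ω * Ωi = 1) (h2 : Ωi * Ω = 1)
    (hD : Dᵀ = D) (hE : Eᵀ = E)
    (hanti : D * E + E * D = (1 + p) • 1 - Ω * K * Ωi + Ωi * K * Ω) :
    (Ωi * D * E).trace = (1 + p) / 2 * Ωi.trace := by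
  have h := congrArg (fun M => (Ωi * M).trace) hanti
  simp only [Matrix.mul_add, Matrix.mul_sub, Matrix.mul_smul, Matrix.mul_one, trace_add,
    trace_sub, trace_smul, smul_eq_mul] at h
  have hED : (Ωi * (E * D)).trace = (Ωi * D * E).trace := by
    rw [← trace_transpose, transpose_mul, transpose_mul, hΩi, hD, hE, trace_mul_comm,
      Matrix.mul_assoc]
  have hK1 : (Ωi * (Ω * K * Ωi)).trace = (K * Ωi).trace := by
    rw [← Matrix.mul_assoc, ← Matrix.mul_assoc, h2, Matrix.one_mul]
  have hK2 : (Ωi * (Ωi * K * Ω)).trace = (K * Ωi).trace := by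
    rw [trace_mul_comm, Matrix.mul_assoc, Matrix.mul_assoc, h1, Matrix.mul_one, trace_mul_comm]
  rw [← Matrix.mul_assoc, hED, hK1, hK2] at h
  linarith

lemma trace_mul_mul_self_eq_of_comm {N : Matrix m m ℝ} (hK : Kᵀ = -K)
    (hanti : D * E + E * D = (1 + p) • 1 - Ω * K * Ωi + Ωi * K * Ω)
    (hcomm : Ω * E * Ωi - Ωi * E * Ω = K * N + N * K) :
    (E * D * E).trace = (1 + p) / 2 * E.trace - (Kᵀ * K * N).trace := by
  have h := congrArg (fun M => (E * M).trace) hanti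
  have h' := congrArg (fun M => (K * M).trace) hcomm
  simp only [Matrix.mul_add, Matrix.mul_sub, Matrix.mul_smul, Matrix.mul_one, trace_add,
    trace_sub, trace_smul, smul_eq_mul] at h h'
  have e1 : (E * (E * D)).trace = (E * D * E).trace := trace_mul_comm _ _
  have e2 : (E * (Ω * K * Ωi)).trace = (K * (Ωi * E * Ω)).trace := by
    simpa only [Matrix.mul_assoc] using trace_mul_comm (E * Ω) (K * Ωi)
  have e3 : (E * (Ωi * K * Ω)).trace = (K * (Ω * E * Ωi)).trace := by
    simpa only [Matrix.mul_assoc] using trace_mul_comm (E * Ωi) (K * Ω)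
  have e4 : (K * (N * K)).trace = (K * K * N).trace := by
    simpa only [Matrix.mul_assoc] using trace_mul_comm (K * N) K
  rw [hK, Matrix.neg_mul, Matrix.neg_mul, trace_neg]
  rw [← Matrix.mul_assoc, e1, e2, e3] at h
  rw [e4, ← Matrix.mul_assoc K K N] at h'
  linarith

end Reduction

section Diagonal

variable {m : Type*} [Fintype m] [DecidableEq m] {ω : m → ℝ}

lemma diagonal_mul_diagonal_inv (hω : ∀ i, ω i ≠ 0) :
    diagonal ω * diagonal ω⁻¹ = 1 := by
  simp [diagonal_mul_diagonal, hω]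

lemma diagonal_inv_mul_diagonal (hω : ∀ i, ω i ≠ 0) :
    diagonal ω⁻¹ * diagonal ω = 1 := by
  simp [diagonal_mul_diagonal, hω]

lemma diagonal_mul_eq_mul_diagonal_of_conj (hω : ∀ i, 0 < ω i) {E : Matrix m m ℝ}
    (h : diagonal ω * E * diagonal ω⁻¹ = diagonal ω⁻¹ * E * diagonal ω) :
    diagonal ω * E = E * diagonal ω := by
  ext i j
  have hij := congrFun (congrFun h i) j
  have hi := hω i
  have hj := hω j
  simp only [diagonal_mul, mul_diagonal, Pi.inv_apply] at hij ⊢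
  field_simp at hij
  have : (ω i + ω j) * (ω i * E i j - E i j * ω j) = 0 := by linear_combination hij
  exact sub_eq_zero.mp ((mul_eq_zero.mp this).resolve_left (by positivity))

lemma smul_eq_of_anticomm (hω : ∀ i, 0 < ω i) {p μ : ℝ} {D K : Matrix m m ℝ}
    (h : D * (μ • diagonal ω⁻¹) + (μ • diagonal ω⁻¹) * D =
      (1 + p) • 1 - diagonal ω * K * diagonal ω⁻¹ + diagonal ω⁻¹ * K * diagonal ω) :
    μ • D = K * diagonal ω - diagonal ω * K + ((1 + p) / 2) • diagonal ω := by
  ext i j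
  have hij := congrFun (congrFun h i) j
  have hi := hω i
  have hj := hω j
  simp only [Matrix.add_apply, Matrix.sub_apply, Matrix.smul_apply, Matrix.mul_smul,
    Matrix.smul_mul, diagonal_mul, mul_diagonal, one_apply, diagonal_apply, Pi.inv_apply,
    smul_eq_mul] at hij ⊢
  by_cases hij' : i = j
  · subst hij'
    simp only [if_true] at hij ⊢
    field_simp at hij
    linarith
  · simp only [if_neg hij', mul_zero, add_zero] at hij ⊢
    field_simp at hij
    have : (ω i + ω j) * (μ * D i j - (K i j * ω j - ω i * K i j)) = 0 := by
      linear_combination hij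
    linarith [(mul_eq_zero.mp this).resolve_left (by positivity)]

lemma mul_diagonal_eq_diagonal_mul_of_trace_eq (hω : ∀ i, 0 < ω i) {K : Matrix m m ℝ}
    (hK : Kᵀ = -K) (h : (K * diagonal ω⁻¹ * K * diagonal ω).trace = (K * K).trace) :
    K * diagonal ω = diagonal ω * K := by
  have hKji (i j : m) : K j i = -K i j := by simpa using congrFun (congrFun hK i) j
  have hterm (i j : m) : (K i j * (ω i - ω j)) ^ 2 / (ω i * ω j) =
      K i j * K j i * (2 - ω i / ω j - ω j / ω i) := by
    have := hω i
    have := hω j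
    rw [hKji]
    field_simp
    ring
  -- the sum equals `2 (tr(K²) - tr(KΩ⁻¹KΩ))`, which vanishes by `h`
  have hsum : ∑ i, ∑ j, (K i j * (ω i - ω j)) ^ 2 / (ω i * ω j) = 0 := by
    have htr : ∑ i, ∑ j, K i j * K j i * (ω i / ω j) = ∑ i, ∑ j, K i j * K j i := by
      simpa [trace, mul_apply, diagonal, Finset.sum_mul, div_eq_mul_inv, mul_comm, mul_left_comm,
        mul_assoc] using h
    have hswap : ∑ i, ∑ j, K i j * K j i * (ω j / ω i) =
        ∑ i, ∑ j, K i j * K j i * (ω i / ω j) := by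
      rw [Finset.sum_comm]
      exact Finset.sum_congr rfl fun i _ => Finset.sum_congr rfl fun j _ => by ring
    calc ∑ i, ∑ j, (K i j * (ω i - ω j)) ^ 2 / (ω i * ω j)
        = ∑ i, ∑ j, (2 * (K i j * K j i) - K i j * K j i * (ω i / ω j) -
            K i j * K j i * (ω j / ω i)) :=
          Finset.sum_congr rfl fun i _ => Finset.sum_congr rfl fun j _ => by rw [hterm]; ring
      _ = 2 * ∑ i, ∑ j, K i j * K j i - ∑ i, ∑ j, K i j * K j i * (ω i / ω j) -
            ∑ i, ∑ j, K i j * K j i * (ω j / ω i) := by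
          simp only [Finset.sum_sub_distrib, Finset.mul_sum]
      _ = 0 := by rw [hswap, htr]; ring
  have hnonneg (i j : m) : 0 ≤ (K i j * (ω i - ω j)) ^ 2 / (ω i * ω j) := by
    have := hω i
    have := hω j
    positivity
  ext i j
  have hij := (Finset.sum_eq_zero_iff_of_nonneg fun j _ => hnonneg i j).mp
    ((Finset.sum_eq_zero_iff_of_nonneg fun i _ =>
      Finset.sum_nonneg fun j _ => hnonneg i j).mp hsum i (Finset.mem_univ i)) j (Finset.mem_univ j)
  have hKij : K i j * (ω i - ω j) = 0 := by simpa [(hω i).ne', (hω j).ne'] using hij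
  simp only [mul_diagonal, diagonal_mul]
  linear_combination -hKij

lemma eq_smul_diagonal_of_anticomm (hω : ∀ i, 0 < ω i) {p μ : ℝ} (hμ : μ ≠ 0)
    {D K : Matrix m m ℝ} (hK : Kᵀ = -K) (hDK : D * (diagonal ω⁻¹ * K) = 0)
    (hanti : D * (μ • diagonal ω⁻¹) + (μ • diagonal ω⁻¹) * D =
      (1 + p) • 1 - diagonal ω * K * diagonal ω⁻¹ + diagonal ω⁻¹ * K * diagonal ω) :
    D = ((1 + p) / 2 / μ) • diagonal ω := by
  have hω' (i : m) : ω i ≠ 0 := (hω i).ne'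
  have hμD := smul_eq_of_anticomm hω hanti
  have htr : (K * diagonal ω⁻¹ * K * diagonal ω).trace = (K * K).trace := by
    have h0 : (μ • D * (diagonal ω⁻¹ * K)).trace = 0 := by
      rw [smul_mul_assoc, hDK, smul_zero, trace_zero]
    have hΩK : diagonal ω * (diagonal ω⁻¹ * K) = K := by
      rw [← Matrix.mul_assoc, diagonal_mul_diagonal_inv hω', Matrix.one_mul]
    have hK0 : K.trace = 0 := by
      simpa using trace_mul_eq_zero_of_transpose_eq_neg hK transpose_one
    rw [hμD] at h0
    simp only [Matrix.add_mul, Matrix.sub_mul, smul_mul_assoc, trace_add, trace_sub, trace_smul,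
      Matrix.mul_assoc, hΩK, hK0, smul_zero, add_zero, sub_eq_zero] at h0
    rw [h0]
    simpa only [Matrix.mul_assoc] using trace_mul_comm (K * diagonal ω⁻¹ * K) (diagonal ω)
  rw [mul_diagonal_eq_diagonal_mul_of_trace_eq hω hK htr, sub_self, zero_add] at hμD
  rw [div_eq_inv_mul, ← smul_smul, ← hμD, smul_smul, inv_mul_cancel₀ hμ, one_smul]

end Diagonal

section Scalar

variable {p T x y κ : ℝ}

lemma mul_sq_le_mul_of_sq_le (hp : 0 < p) (hy : 0 ≤ y) (hκ : 0 ≤ κ)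
    (hCS : ((1 + p) / 2 * T) ^ 2 ≤ y * ((1 + p) / 2 * x - κ)) :
    (1 + p) / 2 * T ^ 2 ≤ x * y := by
  have : (1 + p) / 2 * ((1 + p) / 2 * T ^ 2) ≤ (1 + p) / 2 * (x * y) := by
    nlinarith [mul_nonneg hy hκ]
  exact le_of_mul_le_mul_left this (by positivity)

lemma sqrt_mul_le_of_sq_le (hp : 0 < p) (hy : 0 ≤ y) (hκ : 0 ≤ κ) (hx : κ ≤ (1 + p) / 2 * x)
    (hCS : ((1 + p) / 2 * T) ^ 2 ≤ y * ((1 + p) / 2 * x - κ)) :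
    √(2 * p * (1 + p)) * T ≤ 2 * x + p / 2 * y := by
  have hxy := mul_sq_le_mul_of_sq_le hp hy hκ hCS
  have hx0 : 0 ≤ x := by nlinarith
  have hs : √(2 * p * (1 + p)) ^ 2 = 2 * p * (1 + p) := Real.sq_sqrt (by positivity)
  refine (abs_le_of_sq_le_sq' ?_ (by positivity)).2
  nlinarith [sq_nonneg (2 * x - p / 2 * y)]

lemma eq_zero_and_sq_eq_of_sqrt_mul_eq (hp : 0 < p) (hT : 0 < T) (hy : 0 ≤ y) (hκ : 0 ≤ κ)
    (hCS : ((1 + p) / 2 * T) ^ 2 ≤ y * ((1 + p) / 2 * x - κ))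
    (heq : 2 * x + p / 2 * y = √(2 * p * (1 + p)) * T) :
    κ = 0 ∧ ((1 + p) / 2 * T) ^ 2 = y * ((1 + p) / 2 * x - κ) ∧ 0 < y := by
  have hxy := mul_sq_le_mul_of_sq_le hp hy hκ hCS
  have hs : √(2 * p * (1 + p)) ^ 2 = 2 * p * (1 + p) := Real.sq_sqrt (by positivity)
  have hxy_eq : x * y = (1 + p) / 2 * T ^ 2 := by
    -- the left side is `(2x + py/2)² - 2p(1+p)T²`
    have hsum : (2 * x - p / 2 * y) ^ 2 + 4 * p * (x * y - (1 + p) / 2 * T ^ 2) = 0 := by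
      linear_combination (2 * x + p / 2 * y + √(2 * p * (1 + p)) * T) * heq + T ^ 2 * hs
    nlinarith [sq_nonneg (2 * x - p / 2 * y)]
  have hy0 : 0 < y := by
    rcases hy.lt_or_eq with hy0 | rfl
    · exact hy0
    · nlinarith
  have hκ0 : κ = 0 := by nlinarith
  exact ⟨hκ0, by subst hκ0; linear_combination (1 + p) / 2 * hxy_eq.symm, hy0⟩

lemma div_add_mul_div_two_eq_sqrt_iff {c : ℝ} (hp : 0 < p) (hc : 0 < c) :
    (1 + p) / c + p * c / 2 = √(2 * p * (1 + p)) ↔ c = √(2 * (1 + p) / p) := by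
  set s := √(2 * (1 + p) / p)
  have hs : p * s ^ 2 = 2 * (1 + p) := by
    rw [Real.sq_sqrt (by positivity)]
    field_simp
  have hps : √(2 * p * (1 + p)) = p * s := by
    rw [Real.sqrt_eq_iff_mul_self_eq (by positivity) (by positivity)]
    linear_combination -p * hs
  have key : (1 + p) / c + p * c / 2 - p * s = p * (c - s) ^ 2 / (2 * c) := by
    field_simp
    linear_combination -hs
  rw [hps, ← sub_eq_zero, key]
  simp [hp.ne', hc.ne', sub_eq_zero]

end Scalar

section Atilde

variable {n : ℕ} {ω : Fin n → ℝ} {p : ℝ} {D : Matrix (Fin n) (Fin n) ℝ}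

lemma Atilde_map_ofReal_mulVec (x y : Fin n → ℂ) :
    (Atilde ω D).map (↑) *ᵥ Sum.elim x y =
      Sum.elim (fun i => ω i * y i) (fun i => -(ω i * x i) - (D.map (↑) *ᵥ y) i) := by
  have hneg : ((-D).map (↑) : Matrix (Fin n) (Fin n) ℂ) = -D.map (↑) := by ext; simp
  rw [Atilde, fromBlocks_map, fromBlocks_mulVec, hneg]
  ext (i | i) <;> simp [mulVec_diagonal, Matrix.neg_mulVec, sub_eq_add_neg]

lemma Atilde_map_ofReal_mulVec_eq_smul_iff (x y : Fin n → ℂ) (z : ℂ) :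
    (Atilde ω D).map (↑) *ᵥ Sum.elim x y = z • Sum.elim x y ↔
      (fun i => (ω i : ℂ) * y i) = z • x ∧
        -(fun i => (ω i : ℂ) * x i) - D.map (↑) *ᵥ y = z • y := by
  rw [Atilde_map_ofReal_mulVec, funext_iff, Sum.forall, funext_iff, funext_iff]
  simp

open scoped ComplexOrder in
theorem isStable_Atilde_of_posDef (hω : ∀ i, ω i ≠ 0) (hD : D.PosDef) :
    (Atilde ω D).IsStable := by
  intro z hz
  obtain ⟨u, hu0, hu⟩ := (mem_spectrum_iff_exists_mulVec_eq_smul _ z).mp hz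
  rw [← Sum.elim_comp_inl_inr u, Atilde_map_ofReal_mulVec_eq_smul_iff] at hu
  set x := u ∘ Sum.inl
  set y := u ∘ Sum.inr
  obtain ⟨h1, h2⟩ := hu
  have hy : y ≠ 0 := by
    intro hy0
    apply hu0
    rw [← Sum.elim_comp_inl_inr u]
    ext (i | i)
    · show x i = 0
      simpa [hy0, hω i] using congrFun h2 i
    · exact congrFun hy0 i
  have hx2 := Complex.nonneg_iff.mp (dotProduct_star_self_nonneg x)
  have hy2 := Complex.pos_iff.mp (dotProduct_star_self_pos_iff.mpr hy)
  have hq := hD.re_star_dotProduct_map_ofReal_mulVec_pos hy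
  -- the `Ω`-blocks of `Ã` contribute nothing to `Re ⟪u, Ãu⟫`, so `Re z · ‖u‖² = -Re ⟪y, Dy⟫`
  have hyx : star y ⬝ᵥ (fun i => (ω i : ℂ) * x i) =
      star (star x ⬝ᵥ (fun i => (ω i : ℂ) * y i)) := by
    simp only [dotProduct, star_sum, Pi.star_apply, star_mul', Complex.star_def,
      Complex.conj_ofReal, Complex.conj_conj]
    exact Finset.sum_congr rfl fun i _ => by ring
  have hyy := congrArg (star y ⬝ᵥ ·) h2
  simp only [dotProduct_sub, dotProduct_neg, dotProduct_smul, hyx, h1, smul_eq_mul] at hyy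
  have hre := congrArg Complex.re hyy
  simp only [Complex.sub_re, Complex.neg_re, Complex.star_def, Complex.conj_re, Complex.mul_re]
    at hre
  rw [← hx2.2, ← hy2.2] at hre
  nlinarith

lemma I_mul_mem_spectrum_Atilde {v : Fin n → ℝ} {t : ℝ} (hv : v ≠ 0)
    (hΩv : ∀ i, ω i * v i = t * v i) (hDv : D *ᵥ v = 0) :
    Complex.I * t ∈ spectrum ℂ ((Atilde ω D).map Complex.ofReal) := by
  set vc : Fin n → ℂ := fun i => v i
  have hDvc : D.map (↑) *ᵥ vc = 0 := by
    ext i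
    have := (RingHom.map_mulVec Complex.ofRealHom D v i).symm
    rw [hDv, Pi.zero_apply, map_zero] at this
    exact this
  refine (mem_spectrum_iff_exists_mulVec_eq_smul _ _).mpr
    ⟨Sum.elim vc (Complex.I • vc), fun h => hv (funext fun i => ?_), ?_⟩
  · simpa [vc] using congrFun h (Sum.inl i)
  · rw [Atilde_map_ofReal_mulVec_eq_smul_iff, mulVec_smul, hDvc]
    have hΩvc (i : Fin n) : (ω i : ℂ) * v i = t * v i := by exact_mod_cast hΩv i
    constructor <;> ext i
    · simp only [vc, Pi.smul_apply, smul_eq_mul]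
      linear_combination Complex.I * hΩvc i
    · simp only [vc, Pi.sub_apply, Pi.neg_apply, Pi.smul_apply, Pi.zero_apply, smul_eq_mul]
      linear_combination -hΩvc i - t * v i * Complex.I_sq

theorem Matrix.IsStable.eq_zero_of_mul_eq_zero_of_commute (hst : (Atilde ω D).IsStable)
    {F : Matrix (Fin n) (Fin n) ℝ} (hDF : D * F = 0) (hF : diagonal ω * F = F * diagonal ω) :
    F = 0 := by
  ext i j
  by_contra hFij
  have hΩv (k : Fin n) : ω k * F k j = ω j * F k j := by
    simpa [mul_comm] using congrFun (congrFun hF k) j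
  have hmem := I_mul_mem_spectrum_Atilde (v := fun k => F k j)
    (fun h => hFij (congrFun h i)) hΩv (funext fun k => congrFun (congrFun hDF k) j)
  simpa using hst _ hmem

lemma Atilde_lyapunov_fromBlocks {P B E : Matrix (Fin n) (Fin n) ℝ} (hD : Dᵀ = D)
    (h : Atilde ω D * fromBlocks P B Bᵀ E + fromBlocks P B Bᵀ E * (Atilde ω D)ᵀ =
      -fromBlocks (p • 1) 0 0 1) :
    diagonal ω * Bᵀ + B * diagonal ω = -(p • 1) ∧ diagonal ω * E = P * diagonal ω + B * D ∧
      diagonal ω * B + Bᵀ * diagonal ω + D * E + E * D = 1 := by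
  rw [Atilde, fromBlocks_transpose, fromBlocks_multiply, fromBlocks_multiply, fromBlocks_add,
    fromBlocks_neg, fromBlocks_inj] at h
  obtain ⟨h11, h12, -, h22⟩ := h
  simp only [transpose_zero, transpose_neg, diagonal_transpose, hD, Matrix.zero_mul,
    Matrix.mul_zero, zero_add, Matrix.neg_mul, Matrix.mul_neg, neg_zero] at h11 h12 h22
  refine ⟨h11, ?_, ?_⟩
  · linear_combination (norm := abel) h12
  · linear_combination (norm := abel) -h22

theorem exists_reduced_of_Atilde_lyapunov (hω : ∀ i, ω i ≠ 0) (hD : Dᵀ = D)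
    {X : Matrix (Fin n ⊕ Fin n) (Fin n ⊕ Fin n) ℝ}
    (hX : Atilde ω D * X + X * (Atilde ω D)ᵀ = -fromBlocks (p • 1) 0 0 1) :
    ∃ E K : Matrix (Fin n) (Fin n) ℝ, Eᵀ = E ∧ Kᵀ = -K ∧
      X.trace = 2 * E.trace + p / 2 * (diagonal ω⁻¹ * D * diagonal ω⁻¹).trace ∧
      D * E + E * D =
        (1 + p) • 1 - diagonal ω * K * diagonal ω⁻¹ + diagonal ω⁻¹ * K * diagonal ω ∧
      diagonal ω * E * diagonal ω⁻¹ - diagonal ω⁻¹ * E * diagonal ω =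
        K * (diagonal ω⁻¹ * D * diagonal ω⁻¹) + (diagonal ω⁻¹ * D * diagonal ω⁻¹) * K := by
  set S := (2⁻¹ : ℝ) • (X + Xᵀ) with hSdef
  have hS := lyapunov_half_add_transpose (by simp [fromBlocks_transpose]) hX
  have hSsymm : S.IsSymm := by
    rw [IsSymm, hSdef, transpose_smul, transpose_add, transpose_transpose, add_comm]
  have htr : X.trace = S.trace := by
    rw [hSdef, trace_smul, trace_add, trace_transpose, smul_eq_mul]
    ring
  rw [← fromBlocks_toBlocks S, isSymm_fromBlocks_iff] at hSsymm
  obtain ⟨hP, hBC, -, hE⟩ := hSsymm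
  rw [← hSdef, ← fromBlocks_toBlocks S, ← hBC] at hS
  obtain ⟨h11, h12, h22⟩ := Atilde_lyapunov_fromBlocks hD hS
  obtain ⟨hK, htrP, hanti, hcomm⟩ := lyapunov_block_identities (diagonal_transpose ω)
    (diagonal_transpose ω⁻¹) (diagonal_mul_diagonal_inv hω) (diagonal_inv_mul_diagonal hω) hD
    hP.eq hE.eq rfl h11 h12 h22
  refine ⟨_, _, hE.eq, hK, ?_, hanti, hcomm⟩
  have hblocks := trace_fromBlocks S.toBlocks₁₁ S.toBlocks₁₂ S.toBlocks₂₁ S.toBlocks₂₂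
  rw [fromBlocks_toBlocks] at hblocks
  rw [htr, hblocks, htrP]
  ring

lemma cauchySchwarz_of_reduced (hω : ∀ i, ω i ≠ 0) (hD : D.PosSemidef)
    {E K : Matrix (Fin n) (Fin n) ℝ} (hE : Eᵀ = E) (hK : Kᵀ = -K)
    (hanti : D * E + E * D =
      (1 + p) • 1 - diagonal ω * K * diagonal ω⁻¹ + diagonal ω⁻¹ * K * diagonal ω)
    (hcomm : diagonal ω * E * diagonal ω⁻¹ - diagonal ω⁻¹ * E * diagonal ω =
      K * (diagonal ω⁻¹ * D * diagonal ω⁻¹) + (diagonal ω⁻¹ * D * diagonal ω⁻¹) * K) :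
    0 ≤ (diagonal ω⁻¹ * D * diagonal ω⁻¹).trace ∧
      0 ≤ (Kᵀ * K * (diagonal ω⁻¹ * D * diagonal ω⁻¹)).trace ∧
      (Kᵀ * K * (diagonal ω⁻¹ * D * diagonal ω⁻¹)).trace ≤ (1 + p) / 2 * E.trace ∧
      ((1 + p) / 2 * ∑ i, (ω i)⁻¹) ^ 2 ≤ (diagonal ω⁻¹ * D * diagonal ω⁻¹).trace *
        ((1 + p) / 2 * E.trace - (Kᵀ * K * (diagonal ω⁻¹ * D * diagonal ω⁻¹)).trace) := by
  have hΩi : (diagonal ω⁻¹)ᵀ = diagonal ω⁻¹ := diagonal_transpose _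
  have hDE := trace_mul_mul_eq_of_anticomm hΩi (diagonal_mul_diagonal_inv hω)
    (diagonal_inv_mul_diagonal hω) hD.transpose_eq hE hanti
  have hEDE := trace_mul_mul_self_eq_of_comm hK hanti hcomm
  have hCS := hD.trace_transpose_mul_mul_sq_le (diagonal ω⁻¹) E
  have hE0 := hD.trace_transpose_mul_mul_nonneg E
  rw [hΩi, hE, hDE, hEDE, trace_diagonal] at hCS
  rw [hE, hEDE] at hE0
  refine ⟨?_, ?_, by linarith, by simpa using hCS⟩
  · simpa [hΩi] using hD.trace_transpose_mul_mul_nonneg (diagonal ω⁻¹)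
  · rw [trace_transpose_mul_self_mul_conj hΩi K]
    exact hD.trace_transpose_mul_mul_nonneg _

theorem le_trace_of_Atilde_lyapunov (hω : ∀ i, ω i ≠ 0) (hp : 0 < p) (hD : D.PosSemidef)
    {X : Matrix (Fin n ⊕ Fin n) (Fin n ⊕ Fin n) ℝ}
    (hX : Atilde ω D * X + X * (Atilde ω D)ᵀ = -fromBlocks (p • 1) 0 0 1) :
    √(2 * p * (1 + p)) * ∑ i, (ω i)⁻¹ ≤ X.trace := by
  obtain ⟨E, K, hE, hK, htr, hanti, hcomm⟩ :=
    exists_reduced_of_Atilde_lyapunov hω hD.transpose_eq hX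
  obtain ⟨hy, hκ, hx, hCS⟩ := cauchySchwarz_of_reduced hω hD hE hK hanti hcomm
  rw [htr]
  exact sqrt_mul_le_of_sq_le hp hy hκ hx hCS

theorem trace_eq_of_Atilde_smul_lyapunov (hω : ∀ i, ω i ≠ 0) {c : ℝ} (hc : c ≠ 0)
    {X : Matrix (Fin n ⊕ Fin n) (Fin n ⊕ Fin n) ℝ}
    (hX : Atilde ω (c • diagonal ω) * X + X * (Atilde ω (c • diagonal ω))ᵀ =
      -fromBlocks (p • 1) 0 0 1) :
    X.trace = ((1 + p) / c + p * c / 2) * ∑ i, (ω i)⁻¹ := by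
  have hD : (c • diagonal ω)ᵀ = c • diagonal ω := by rw [transpose_smul, diagonal_transpose]
  obtain ⟨E, K, hE, -, htr, hanti, -⟩ := exists_reduced_of_Atilde_lyapunov hω hD hX
  have hDE := trace_mul_mul_eq_of_anticomm (diagonal_transpose _) (diagonal_mul_diagonal_inv hω)
    (diagonal_inv_mul_diagonal hω) hD hE hanti
  have hΩD : diagonal ω⁻¹ * (c • diagonal ω) = c • 1 := by
    rw [mul_smul_comm, diagonal_inv_mul_diagonal hω]
  simp only [hΩD, smul_mul_assoc, Matrix.one_mul, trace_smul, trace_diagonal, Pi.inv_apply,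
    smul_eq_mul] at hDE htr
  have hEtr : E.trace = (1 + p) / 2 * (∑ i, (ω i)⁻¹) / c := by
    rw [← hDE]
    field_simp
  rw [htr, hEtr]
  field_simp

lemma exists_anticomm_of_Atilde_lyapunov_trace_eq (hω : ∀ i, 0 < ω i) (hp : 0 < p)
    (hT : 0 < ∑ i, (ω i)⁻¹) (hD : D.PosSemidef) (hst : (Atilde ω D).IsStable)
    {X : Matrix (Fin n ⊕ Fin n) (Fin n ⊕ Fin n) ℝ}
    (hX : Atilde ω D * X + X * (Atilde ω D)ᵀ = -fromBlocks (p • 1) 0 0 1)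
    (htr : X.trace = √(2 * p * (1 + p)) * ∑ i, (ω i)⁻¹) :
    ∃ μ : ℝ, 0 < μ ∧ ∃ K : Matrix (Fin n) (Fin n) ℝ, Kᵀ = -K ∧ D * (diagonal ω⁻¹ * K) = 0 ∧
      D * (μ • diagonal ω⁻¹) + (μ • diagonal ω⁻¹) * D =
        (1 + p) • 1 - diagonal ω * K * diagonal ω⁻¹ + diagonal ω⁻¹ * K * diagonal ω := by
  have hω' (i : Fin n) : ω i ≠ 0 := (hω i).ne'
  have hΩi : (diagonal ω⁻¹)ᵀ = diagonal ω⁻¹ := diagonal_transpose _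
  obtain ⟨E, K, hE, hK, htrX, hanti, hcomm⟩ :=
    exists_reduced_of_Atilde_lyapunov hω' hD.transpose_eq hX
  obtain ⟨hy, hκ, -, hCS⟩ := cauchySchwarz_of_reduced hω' hD hE hK hanti hcomm
  obtain ⟨hκ0, hCSeq, hy0⟩ := eq_zero_and_sq_eq_of_sqrt_mul_eq hp hT hy hκ hCS (htrX ▸ htr)
  have hDK : D * (diagonal ω⁻¹ * K) = 0 := by
    rw [trace_transpose_mul_self_mul_conj hΩi K] at hκ0
    have h := hD.mul_eq_zero_of_trace_transpose_mul_mul_eq_zero hκ0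
    rwa [hK, Matrix.mul_neg, Matrix.mul_neg, neg_eq_zero] at h
  have hEΩ : diagonal ω * E = E * diagonal ω :=
    diagonal_mul_eq_mul_diagonal_of_conj hω
      (conj_eq_of_mul_eq_zero hΩi hD.transpose_eq hK hDK hcomm)
  have hDE := trace_mul_mul_eq_of_anticomm hΩi (diagonal_mul_diagonal_inv hω')
    (diagonal_inv_mul_diagonal hω') hD.transpose_eq hE hanti
  have hEDE := trace_mul_mul_self_eq_of_comm hK hanti hcomm
  have hF := hD.mul_sub_smul_eq_zero_of_sq_eq (M := diagonal ω⁻¹) (N := E)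
    (by rw [hΩi]; exact hy0.ne') (by rw [hΩi, hE, hDE, hEDE, trace_diagonal]; simpa using hCSeq)
  set μ := ((diagonal ω⁻¹)ᵀ * D * E).trace / ((diagonal ω⁻¹)ᵀ * D * diagonal ω⁻¹).trace
  have hμ : 0 < μ := by
    simp only [μ, hΩi, hDE, trace_diagonal]
    positivity
  have hEμ : E = μ • diagonal ω⁻¹ := by
    refine sub_eq_zero.mp (hst.eq_zero_of_mul_eq_zero_of_commute hF ?_)
    rw [Matrix.mul_sub, Matrix.sub_mul, hEΩ, mul_smul_comm, smul_mul_assoc,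
      diagonal_mul_diagonal_inv hω', diagonal_inv_mul_diagonal hω']
  exact ⟨μ, hμ, K, hK, hDK, hEμ ▸ hanti⟩

theorem eq_sqrt_smul_of_Atilde_lyapunov_trace_eq [NeZero n] (hω : ∀ i, 0 < ω i) (hp : 0 < p)
    (hD : D.PosSemidef) (hst : (Atilde ω D).IsStable)
    {X : Matrix (Fin n ⊕ Fin n) (Fin n ⊕ Fin n) ℝ}
    (hX : Atilde ω D * X + X * (Atilde ω D)ᵀ = -fromBlocks (p • 1) 0 0 1)
    (htr : X.trace = √(2 * p * (1 + p)) * ∑ i, (ω i)⁻¹) :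
    D = √(2 * (1 + p) / p) • diagonal ω := by
  have hT : 0 < ∑ i, (ω i)⁻¹ :=
    Finset.sum_pos (fun i _ => inv_pos.mpr (hω i)) Finset.univ_nonempty
  obtain ⟨μ, hμ, K, hK, hDK, hanti⟩ :=
    exists_anticomm_of_Atilde_lyapunov_trace_eq hω hp hT hD hst hX htr
  have hc : 0 < (1 + p) / 2 / μ := by positivity
  obtain rfl := eq_smul_diagonal_of_anticomm hω hμ.ne' hK hDK hanti
  rw [trace_eq_of_Atilde_smul_lyapunov (fun i => (hω i).ne') hc.ne' hX] at htr
  rw [(div_add_mul_div_two_eq_sqrt_iff hp hc).mp (mul_right_cancel₀ hT.ne' htr)]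

end Atilde

theorem mixed_H2_global_minimum_general (n : ℕ) (hn : 1 ≤ n) (ω : Fin n → ℝ)
    (hω : ∀ i, 0 < ω i) (p : ℝ) (hp0 : 0 < p) :
    -- the right-hand side  −diag(p·Iₙ, Iₙ)
    let W : Matrix (Fin n ⊕ Fin n) (Fin n ⊕ Fin n) ℝ :=
      Matrix.fromBlocks (p • (1 : Matrix (Fin n) (Fin n) ℝ)) 0 0 1
    let Dstar : Matrix (Fin n) (Fin n) ℝ :=
      Real.sqrt (2 * (1 + p) / p) • Matrix.diagonal ω
    -- lower bound for every feasible D̃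
    (∀ D : Matrix (Fin n) (Fin n) ℝ, D.PosSemidef → (Atilde ω D).IsStable →
      ∀ X : Matrix (Fin n ⊕ Fin n) (Fin n ⊕ Fin n) ℝ,
        Atilde ω D * X + X * (Atilde ω D)ᵀ = -W →
        Real.sqrt (2 * p * (1 + p)) * (∑ i, (ω i)⁻¹) ≤ X.trace) ∧
    -- the minimizer is feasible and attains the bound
    (Dstar.PosSemidef ∧ (Atilde ω Dstar).IsStable ∧
      ∀ X : Matrix (Fin n ⊕ Fin n) (Fin n ⊕ Fin n) ℝ,
        Atilde ω Dstar * X + X * (Atilde ω Dstar)ᵀ = -W →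
        X.trace = Real.sqrt (2 * p * (1 + p)) * (∑ i, (ω i)⁻¹)) ∧
    -- uniqueness of the minimizer
    (∀ D : Matrix (Fin n) (Fin n) ℝ, D.PosSemidef → (Atilde ω D).IsStable →
      ∀ X : Matrix (Fin n ⊕ Fin n) (Fin n ⊕ Fin n) ℝ,
        Atilde ω D * X + X * (Atilde ω D)ᵀ = -W →
        X.trace = Real.sqrt (2 * p * (1 + p)) * (∑ i, (ω i)⁻¹) →
        D = Dstar) := by
  intro W Dstar
  have : NeZero n := ⟨by omega⟩
  have hω' (i : Fin n) : ω i ≠ 0 := (hω i).ne'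
  have hc : 0 < √(2 * (1 + p) / p) := Real.sqrt_pos.mpr (by positivity)
  have hDstar : Dstar.PosDef := (posDef_diagonal_iff.mpr hω).smul hc
  refine ⟨fun D hD _ X hX => le_trace_of_Atilde_lyapunov hω' hp0 hD hX,
    ⟨hDstar.posSemidef, isStable_Atilde_of_posDef hω' hDstar, fun X hX => ?_⟩,
    fun D hD hst X hX htr => eq_sqrt_smul_of_Atilde_lyapunov_trace_eq hω hp0 hD hst hX htr⟩
  rw [trace_eq_of_Atilde_smul_lyapunov hω' hc.ne' hX,
    (div_add_mul_div_two_eq_sqrt_iff hp0 hc).mpr rfl]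

theorem mixed_H2_global_minimum (n : ℕ) (hn : 1 ≤ n) (ω : Fin n → ℝ)
    (hω : ∀ i, 0 < ω i) (p : ℝ) (hp0 : 0 < p) (hp1 : p < 1) :
    -- the right-hand side  −diag(p·Iₙ, Iₙ)
    let W : Matrix (Fin n ⊕ Fin n) (Fin n ⊕ Fin n) ℝ :=
      Matrix.fromBlocks (p • (1 : Matrix (Fin n) (Fin n) ℝ)) 0 0 1
    let Dstar : Matrix (Fin n) (Fin n) ℝ :=
      Real.sqrt (2 * (1 + p) / p) • Matrix.diagonal ω
    -- lower bound for every feasible D̃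
    (∀ D : Matrix (Fin n) (Fin n) ℝ, D.PosSemidef → (Atilde ω D).IsStable →
      ∀ X : Matrix (Fin n ⊕ Fin n) (Fin n ⊕ Fin n) ℝ,
        Atilde ω D * X + X * (Atilde ω D)ᵀ = -W →
        Real.sqrt (2 * p * (1 + p)) * (∑ i, (ω i)⁻¹) ≤ X.trace) ∧
    -- the minimizer is feasible and attains the bound
    (Dstar.PosSemidef ∧ (Atilde ω Dstar).IsStable ∧
      ∀ X : Matrix (Fin n ⊕ Fin n) (Fin n ⊕ Fin n) ℝ,
        Atilde ω Dstar * X + X * (Atilde ω Dstar)ᵀ = -W →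
        X.trace = Real.sqrt (2 * p * (1 + p)) * (∑ i, (ω i)⁻¹)) ∧
    -- uniqueness of the minimizer
    (∀ D : Matrix (Fin n) (Fin n) ℝ, D.PosSemidef → (Atilde ω D).IsStable →
      ∀ X : Matrix (Fin n ⊕ Fin n) (Fin n ⊕ Fin n) ℝ,
        Atilde ω D * X + X * (Atilde ω D)ᵀ = -W →
        X.trace = Real.sqrt (2 * p * (1 + p)) * (∑ i, (ω i)⁻¹) →
        D = Dstar) :=
  mixed_H2_global_minimum_general n hn ω hω p hp0
end

section
/- Let n ≥ 1, let Ω = diag(ω₁, …, ωₙ) be a real diagonal matrix with ωᵢ > 0, and let 0 < p < 1. Set D̃* = √(2(1+p)/p)·Ω. Then Ã(D̃*) is stable, and the unique solution X* of the Lyapunov equation Ã(D̃*)X* + X*Ã(D̃*)ᵀ = −diag(p·Iₙ, Iₙ) satisfies Tr(X*) = √(2p(1+p))·∑_{i=1}^n ωᵢ^{-1}. -/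
open Matrix

/-- auxiliary equivalence -/
def sumFinEquiv (n : ℕ) : Fin n ⊕ Fin n ≃ Fin 2 × Fin n where
  toFun := Sum.elim (fun i => (0, i)) (fun i => (1, i))
  invFun := fun p => if p.1 = 0 then Sum.inl p.2 else Sum.inr p.2
  left_inv := by rintro (i | i) <;> simp
  right_inv := by
    rintro ⟨a, i⟩
    fin_cases a <;> simp

lemma fromBlocks_diag_eq_submatrix {n : ℕ} (a b c d : Fin n → ℂ) :
    Matrix.fromBlocks (diagonal a) (diagonal b) (diagonal c) (diagonal d) =
      (Matrix.blockDiagonal (fun i => !![a i, b i; c i, d i])).submatrix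
        (sumFinEquiv n) (sumFinEquiv n) := by
  ext x y
  rcases x with i | i <;> rcases y with j | j <;>
    simp [sumFinEquiv, Matrix.blockDiagonal_apply, Matrix.diagonal_apply, eq_comm]

lemma det_fromBlocks_diag {n : ℕ} (a b c d : Fin n → ℂ) :
    (Matrix.fromBlocks (diagonal a) (diagonal b) (diagonal c) (diagonal d)).det =
      ∏ i, (a i * d i - b i * c i) := by
  rw [fromBlocks_diag_eq_submatrix, Matrix.det_submatrix_equiv_self,
    Matrix.det_blockDiagonal]
  congr 1
  ext i
  rw [Matrix.det_fin_two_of]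

lemma quad_root_re_neg (b c : ℝ) (hb : 0 < b) (hc : 0 < c) (z : ℂ)
    (hz : z * z + (b : ℂ) * z + (c : ℂ) = 0) : z.re < 0 := by
  have hre : z.re * z.re - z.im * z.im + b * z.re + c = 0 := by
    have := congrArg Complex.re hz
    simpa [Complex.add_re, Complex.mul_re] using this
  have him : z.im * (2 * z.re + b) = 0 := by
    have := congrArg Complex.im hz
    simp [Complex.add_im, Complex.mul_im] at this
    ring_nf
    ring_nf at this
    linarith
  by_contra h
  push_neg at h
  rcases mul_eq_zero.mp him with hy | hx
  · rw [hy] at hre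
    nlinarith
  · nlinarith

theorem optimal_modal_damping_attains_value (n : ℕ) (hn : 1 ≤ n) (ω : Fin n → ℝ)
    (hω : ∀ i, 0 < ω i) (p : ℝ) (hp0 : 0 < p) (hp1 : p < 1) :
    let W : Matrix (Fin n ⊕ Fin n) (Fin n ⊕ Fin n) ℝ :=
      Matrix.fromBlocks (p • (1 : Matrix (Fin n) (Fin n) ℝ)) 0 0 1
    let Dstar : Matrix (Fin n) (Fin n) ℝ :=
      Real.sqrt (2 * (1 + p) / p) • Matrix.diagonal ω
    (Atilde ω Dstar).IsStable ∧
      ∀ X : Matrix (Fin n ⊕ Fin n) (Fin n ⊕ Fin n) ℝ,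
        Atilde ω Dstar * X + X * (Atilde ω Dstar)ᵀ = -W →
        X.trace = Real.sqrt (2 * p * (1 + p)) * (∑ i, (ω i)⁻¹) := by
  intro W Dstar
  set s : ℝ := Real.sqrt (2 * (1 + p) / p) with hs_def
  have hfrac : 0 < 2 * (1 + p) / p := by positivity
  have hs0 : 0 < s := Real.sqrt_pos.mpr hfrac
  have hs2 : s ^ 2 = 2 * (1 + p) / p := Real.sq_sqrt hfrac.le
  set k : ℝ := Real.sqrt (2 * p * (1 + p)) with hk_def
  have hk0 : 0 < k := Real.sqrt_pos.mpr (by positivity)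
  have hks : k * s = 2 * (1 + p) := by
    rw [hk_def, hs_def, ← Real.sqrt_mul (by positivity)]
    rw [show 2 * p * (1 + p) * (2 * (1 + p) / p) = (2 * (1 + p)) ^ 2 by
      field_simp]
    exact Real.sqrt_sq (by positivity)
  have hDstar : Dstar = Matrix.diagonal (fun i => s * ω i) := by
    rw [show (fun i => s * ω i) = s • ω from rfl, Matrix.diagonal_smul]
  constructor
  · -- stability
    intro z hz
    rw [spectrum.mem_iff] at hz
    have hdet : (algebraMap ℂ (Matrix (Fin n ⊕ Fin n) (Fin n ⊕ Fin n) ℂ) z -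
        (Atilde ω Dstar).map (Complex.ofReal ·)).det = 0 := by
      by_contra hd
      exact hz ((Matrix.isUnit_iff_isUnit_det _).mpr (isUnit_iff_ne_zero.mpr hd))
    have hform : algebraMap ℂ (Matrix (Fin n ⊕ Fin n) (Fin n ⊕ Fin n) ℂ) z -
        (Atilde ω Dstar).map (Complex.ofReal ·) =
        Matrix.fromBlocks (diagonal fun _ => z) (diagonal fun i => -(ω i : ℂ))
          (diagonal fun i => (ω i : ℂ)) (diagonal fun i => z + (s * ω i : ℝ)) := by
      rw [hDstar]
      ext x y
      rcases x with i | i <;> rcases y with j | j <;>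
        simp [Atilde, Matrix.algebraMap_matrix_apply, Matrix.diagonal_apply,
          Matrix.sub_apply, Matrix.map_apply, Matrix.fromBlocks] <;>
        by_cases h : i = j <;> simp [h]
    rw [hform, det_fromBlocks_diag] at hdet
    obtain ⟨i, -, hi⟩ := Finset.prod_eq_zero_iff.mp hdet
    have hqe : z * z + ((s * ω i : ℝ) : ℂ) * z + (((ω i) ^ 2 : ℝ) : ℂ) = 0 := by
      push_cast
      push_cast at hi
      linear_combination hi
    exact quad_root_re_neg (s * ω i) ((ω i) ^ 2) (mul_pos hs0 (hω i)) (pow_pos (hω i) 2) z hqe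
  · -- trace value
    intro X hX
    set P := X.toBlocks₁₁
    set Q := X.toBlocks₁₂
    set R := X.toBlocks₂₁
    set S := X.toBlocks₂₂
    have hXb : X = Matrix.fromBlocks P Q R S := (Matrix.fromBlocks_toBlocks X).symm
    rw [hXb, hDstar] at hX
    rw [Atilde, Matrix.fromBlocks_transpose, Matrix.fromBlocks_multiply,
      Matrix.fromBlocks_multiply, Matrix.fromBlocks_add] at hX
    rw [show -W = Matrix.fromBlocks (-(p • (1 : Matrix (Fin n) (Fin n) ℝ))) 0 0 (-1) by
      simp [W, Matrix.fromBlocks_neg]] at hX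
    rw [Matrix.fromBlocks_inj] at hX
    obtain ⟨h11, h12, h21, h22⟩ := hX
    -- per-index scalar equations
    have key : ∀ i, P i i + S i i = k * (ω i)⁻¹ := by
      intro i
      have hωi := hω i
      have e11 := congrFun (congrFun h11 i) i
      have e12 := congrFun (congrFun h12 i) i
      have e21 := congrFun (congrFun h21 i) i
      have e22 := congrFun (congrFun h22 i) i
      simp [Matrix.add_apply, Matrix.mul_apply, Matrix.diagonal_apply,
        Matrix.transpose_apply, Matrix.neg_apply, Matrix.smul_apply,
        Matrix.one_apply, Finset.sum_ite_eq, Finset.sum_ite_eq',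
        ite_mul, mul_ite, mul_comm] at e11 e12 e21 e22
      -- now solve
      have hωs : ω i * s ≠ 0 := by positivity
      have hRQ : R i i = Q i i := by
        have h : Q i i * (ω i * s) = R i i * (ω i * s) := by linarith
        exact (mul_right_cancel₀ hωs h).symm
      rw [hRQ] at e11 e22
      have hQ : 2 * (ω i * Q i i) = -p := by linarith
      have hS : 2 * (S i i * (ω i * s)) = 1 + p := by linarith
      have hs2' : s ^ 2 * p = 2 * (1 + p) := by
        rw [hs2]; field_simp
      rw [← div_eq_mul_inv, eq_div_iff hωi.ne']
      have h2s : (2 * s) * ((P i i + S i i) * ω i) = (2 * s) * k := by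
        linear_combination (-2 * s) * e12 + 2 * hS + (-(s ^ 2)) * hQ + hs2' + (-2) * hks
      exact mul_left_cancel₀ (by positivity) h2s
    have htr : X.trace = ∑ i, (P i i + S i i) := by
      rw [hXb]
      simp [Matrix.trace, Matrix.diag, Fintype.sum_sum_type, Matrix.fromBlocks,
        Finset.sum_add_distrib, P, S]
    rw [htr]
    rw [Finset.mul_sum]
    exact Finset.sum_congr rfl fun i _ => key i
end

section
/- Let Ω = diag(ω₁, …, ωₙ) be a real diagonal matrix with ωᵢ > 0 and let B̃₂ ∈ ℝ^{n×m}. For α > 0 set Ã(α) = [[0, Ω], [−Ω, −αΩ]] ∈ ℝ^{2n×2n} and B̃ = [0; B̃₂] ∈ ℝ^{2n×m}. Then Ã(α) is stable for every α > 0, and the unique solution X(α) of the Lyapunov equation Ã(α)X + XÃ(α)ᵀ = −B̃B̃ᵀ converges to the zero matrix as α → ∞. -/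
/-!
Because Ω is diagonal, the Lyapunov equation decouples: for every pair of indices (i, j) the
(i, j) entries of the four n × n blocks of X satisfy a 4 × 4 linear system whose determinant is a
multiple of `(ωᵢ + ωⱼ)(ωᵢωⱼα² + (ωⱼ - ωᵢ)²)`. Solving it, every entry of X(α) is a polynomial of
degree at most 1 in α divided by this quadratic, hence tends to 0. Stability comes from the same
decoupling: if `Ã(α) v = z v` with `v ≠ 0`, then for some i the pair `(vᵢ, vₙ₊ᵢ)` gives
`z² + αωᵢ z + ωᵢ² = 0`, and a real quadratic with positive coefficients has its roots in the open
left half-plane.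
-/

open Matrix Filter

open Topology

theorem Complex.re_neg_of_sq_add_mul_add_eq_zero {b c : ℝ} (hb : 0 < b) (hc : 0 < c) {z : ℂ}
    (hz : z ^ 2 + b * z + c = 0) : z.re < 0 := by
  have hre := congrArg Complex.re hz
  have him := congrArg Complex.im hz
  simp only [pow_two, add_re, mul_re, add_im, mul_im, ofReal_re, ofReal_im, zero_re,
    zero_im] at hre him
  by_contra! hz_re
  have him_zero : z.im = 0 := by
    have : z.im * (2 * z.re + b) = 0 := by linear_combination him
    exact (mul_eq_zero.1 this).resolve_right (by positivity)
  rw [him_zero] at hre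
  nlinarith [mul_nonneg hb.le hz_re]

theorem Matrix.exists_mulVec_eq_smul_of_mem_spectrum {ι K : Type*} [Fintype ι] [DecidableEq ι]
    [Field K] {M : Matrix ι ι K} {z : K} (hz : z ∈ spectrum K M) : ∃ v ≠ 0, M *ᵥ v = z • v := by
  rw [← Matrix.spectrum_toLin', ← Module.End.hasEigenvalue_iff_mem_spectrum] at hz
  obtain ⟨v, hv⟩ := hz.exists_hasEigenvector
  exact ⟨v, hv.2, by simpa using hv.apply_eq_smul⟩

def lyapunovDenom (p q α : ℝ) : ℝ := (p + q) * (p * q * α ^ 2 + (q - p) ^ 2)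

section Scalar

variable {p q : ℝ}

theorem lyapunovDenom_pos (hp : 0 < p) (hq : 0 < q) {α : ℝ} (hα : 0 < α) :
    0 < lyapunovDenom p q α := by
  unfold lyapunovDenom; positivity

theorem tendsto_lyapunovDenom_atTop (hp : 0 < p) (hq : 0 < q) :
    Tendsto (lyapunovDenom p q) atTop atTop :=
  (((tendsto_pow_atTop two_ne_zero).const_mul_atTop (mul_pos hp hq)).atTop_add
    tendsto_const_nhds).const_mul_atTop (add_pos hp hq)

theorem tendsto_div_lyapunovDenom_atTop (hp : 0 < p) (hq : 0 < q) :
    Tendsto (fun α => α / lyapunovDenom p q α) atTop (𝓝 0) := by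
  have hratio : Tendsto (fun α => (p + q) * (p * q * α + (q - p) ^ 2 / α)) atTop atTop :=
    ((tendsto_id.const_mul_atTop (mul_pos hp hq)).atTop_add
      (tendsto_const_nhds.div_atTop tendsto_id)).const_mul_atTop (add_pos hp hq)
  refine hratio.inv_tendsto_atTop.congr' ?_
  filter_upwards [eventually_gt_atTop 0] with α hα
  rw [Pi.inv_apply, lyapunovDenom]
  field_simp

theorem lyapunov_entry_system_solution {α w a b c d : ℝ} (hp : 0 < p) (hq : 0 < q) (hα : 0 < α)
    (h₁₁ : p * c + q * b = 0) (h₁₂ : p * d - q * a - α * q * b = 0)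
    (h₂₁ : q * d - p * a - α * p * c = 0) (h₂₂ : p * b + α * p * d + q * c + α * q * d = w) :
    a = p * q * w * (α / lyapunovDenom p q α) ∧ b = (p - q) * p * w / lyapunovDenom p q α ∧
      c = (q - p) * q * w / lyapunovDenom p q α ∧ d = p * q * w * (α / lyapunovDenom p q α) := by
  have hD := lyapunovDenom_pos hp hq hα
  simp only [mul_div_assoc', eq_div_iff hD.ne']
  unfold lyapunovDenom at hD ⊢
  -- Cramer's rule gives `d`; the other unknowns follow after cancelling `αq`, `p`, `q`.
  have hd : d * ((p + q) * (p * q * α ^ 2 + (q - p) ^ 2)) = p * q * w * α := by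
    linear_combination (-(α * p * q)) * h₁₁ + (-(q - p) * p) * h₁₂ + ((q - p) * q) * h₂₁ +
      (α * q * p) * h₂₂
  have hb : b * ((p + q) * (p * q * α ^ 2 + (q - p) ^ 2)) = (p - q) * p * w := by
    refine mul_left_cancel₀ (mul_pos hα hq).ne' ?_
    linear_combination (p * q * α ^ 2 + (q - p) ^ 2) * (α * q * h₁₁ - p * h₁₂ + q * h₂₁) +
      (p - q) * hd
  have hc : c * ((p + q) * (p * q * α ^ 2 + (q - p) ^ 2)) = (q - p) * q * w := by
    refine mul_left_cancel₀ hp.ne' ?_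
    linear_combination ((p + q) * (p * q * α ^ 2 + (q - p) ^ 2)) * h₁₁ - q * hb
  have ha : a * ((p + q) * (p * q * α ^ 2 + (q - p) ^ 2)) = p * q * w * α := by
    refine mul_left_cancel₀ hq.ne' ?_
    linear_combination (-((p + q) * (p * q * α ^ 2 + (q - p) ^ 2))) * h₁₂ + p * hd - α * q * hb
  exact ⟨ha, hb, hc, hd⟩

end Scalar

section DampedOscillator

variable {ι : Type*}

noncomputable def dampedOscillatorLyapunovSolution (ω : ι → ℝ) (W : Matrix ι ι ℝ) (α : ℝ) :
    Matrix (ι ⊕ ι) (ι ⊕ ι) ℝ :=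
  let diagonalBlock := of fun i j => ω i * ω j * W i j * (α / lyapunovDenom (ω i) (ω j) α)
  fromBlocks diagonalBlock (of fun i j => (ω i - ω j) * ω i * W i j / lyapunovDenom (ω i) (ω j) α)
    (of fun i j => (ω j - ω i) * ω j * W i j / lyapunovDenom (ω i) (ω j) α) diagonalBlock

theorem tendsto_dampedOscillatorLyapunovSolution_atTop {ω : ι → ℝ} (hω : ∀ i, 0 < ω i)
    (W : Matrix ι ι ℝ) : Tendsto (dampedOscillatorLyapunovSolution ω W) atTop (𝓝 0) := by
  refine tendsto_pi_nhds.2 fun k => tendsto_pi_nhds.2 fun l => ?_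
  rcases k with i | i <;> rcases l with j | j <;>
    simp only [dampedOscillatorLyapunovSolution, fromBlocks_apply₁₁, fromBlocks_apply₁₂,
      fromBlocks_apply₂₁, fromBlocks_apply₂₂, of_apply, Matrix.zero_apply]
  · simpa using (tendsto_div_lyapunovDenom_atTop (hω i) (hω j)).const_mul (ω i * ω j * W i j)
  · exact tendsto_const_nhds.div_atTop (tendsto_lyapunovDenom_atTop (hω i) (hω j))
  · exact tendsto_const_nhds.div_atTop (tendsto_lyapunovDenom_atTop (hω i) (hω j))
  · simpa using (tendsto_div_lyapunovDenom_atTop (hω i) (hω j)).const_mul (ω i * ω j * W i j)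

variable [Fintype ι] [DecidableEq ι]

-- `Ã(α)`: the first-order form of `ẍ + αΩẋ + Ω²x = 0` in the variables `(Ωx, ẋ)`.
def dampedOscillatorMatrix (ω : ι → ℝ) (α : ℝ) : Matrix (ι ⊕ ι) (ι ⊕ ι) ℝ :=
  fromBlocks 0 (diagonal ω) (-(diagonal ω)) (-(α • diagonal ω))

theorem dampedOscillatorMatrix_isStable {ω : ι → ℝ} (hω : ∀ i, 0 < ω i) {α : ℝ} (hα : 0 < α) :
    (dampedOscillatorMatrix ω α).IsStable := by
  intro z hz
  obtain ⟨v, hv0, hv⟩ := exists_mulVec_eq_smul_of_mem_spectrum hz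
  have hcoord : ∀ i, z * v (.inl i) = ω i * v (.inr i) ∧
      z * v (.inr i) = -(ω i * v (.inl i)) - α * ω i * v (.inr i) := fun i => by
    have hl := congrFun hv (.inl i)
    have hr := congrFun hv (.inr i)
    simp only [mulVec, dotProduct, dampedOscillatorMatrix, diagonal_neg, map_apply,
      Fintype.sum_sum_type, fromBlocks_apply₁₁, fromBlocks_apply₁₂, fromBlocks_apply₂₁,
      fromBlocks_apply₂₂, Matrix.zero_apply, Matrix.neg_apply, Matrix.smul_apply, diagonal_apply,
      Complex.ofReal_zero, Complex.ofReal_neg, Complex.ofReal_mul, apply_ite, ite_mul, zero_mul,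
      Finset.sum_const_zero, Finset.sum_ite_eq, Finset.mem_univ, ↓reduceIte, zero_add,
      Pi.smul_apply, smul_eq_mul, neg_mul, mul_zero, neg_zero] at hl hr
    exact ⟨hl.symm, by linear_combination -hr⟩
  obtain ⟨i, hvi⟩ : ∃ i, v (.inr i) ≠ 0 := by
    obtain ⟨k | i, hk⟩ := Function.ne_iff.1 hv0
    · refine ⟨k, fun hvk => hk ?_⟩
      simpa [hvk, (hω k).ne'] using (hcoord k).2
    · exact ⟨i, hk⟩
  have hquad : (z ^ 2 + (α * ω i : ℝ) * z + (ω i ^ 2 : ℝ)) * v (.inr i) = 0 := by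
    push_cast
    linear_combination z * (hcoord i).2 - ω i * (hcoord i).1
  exact Complex.re_neg_of_sq_add_mul_add_eq_zero (mul_pos hα (hω i)) (pow_pos (hω i) 2)
    ((mul_eq_zero.1 hquad).resolve_right hvi)

theorem dampedOscillatorMatrix_lyapunov_apply {ω : ι → ℝ} {α : ℝ} {W : Matrix ι ι ℝ}
    {X : Matrix (ι ⊕ ι) (ι ⊕ ι) ℝ}
    (hX : dampedOscillatorMatrix ω α * X + X * (dampedOscillatorMatrix ω α)ᵀ = -fromBlocks 0 0 0 W)
    (i j : ι) :
    ω i * X (.inr i) (.inl j) + ω j * X (.inl i) (.inr j) = 0 ∧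
      ω i * X (.inr i) (.inr j) - ω j * X (.inl i) (.inl j) - α * ω j * X (.inl i) (.inr j) = 0 ∧
      ω j * X (.inr i) (.inr j) - ω i * X (.inl i) (.inl j) - α * ω i * X (.inr i) (.inl j) = 0 ∧
      ω i * X (.inl i) (.inr j) + α * ω i * X (.inr i) (.inr j) + ω j * X (.inr i) (.inl j) +
        α * ω j * X (.inr i) (.inr j) = W i j := by
  have h₁₁ := congrFun₂ hX (.inl i) (.inl j)
  have h₁₂ := congrFun₂ hX (.inl i) (.inr j)
  have h₂₁ := congrFun₂ hX (.inr i) (.inl j)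
  have h₂₂ := congrFun₂ hX (.inr i) (.inr j)
  simp only [dampedOscillatorMatrix, diagonal_neg, Matrix.add_apply, mul_apply, transpose_apply,
    Fintype.sum_sum_type, fromBlocks_apply₁₁, fromBlocks_apply₁₂, fromBlocks_apply₂₁,
    fromBlocks_apply₂₂, Matrix.zero_apply, Matrix.neg_apply, Matrix.smul_apply, diagonal_apply,
    smul_eq_mul, zero_mul, mul_zero, ite_mul, mul_ite, Finset.sum_const_zero, Finset.sum_ite_eq,
    Finset.mem_univ, ↓reduceIte, zero_add, neg_zero, mul_neg, neg_mul,
    Finset.sum_neg_distrib] at h₁₁ h₁₂ h₂₁ h₂₂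
  exact ⟨by linear_combination h₁₁, by linear_combination h₁₂, by linear_combination h₂₁,
    by linear_combination -h₂₂⟩

theorem eq_dampedOscillatorLyapunovSolution {ω : ι → ℝ} (hω : ∀ i, 0 < ω i) {α : ℝ} (hα : 0 < α)
    {W : Matrix ι ι ℝ} {X : Matrix (ι ⊕ ι) (ι ⊕ ι) ℝ}
    (hX : dampedOscillatorMatrix ω α * X + X * (dampedOscillatorMatrix ω α)ᵀ =
      -fromBlocks 0 0 0 W) :
    X = dampedOscillatorLyapunovSolution ω W α := by
  have h := dampedOscillatorMatrix_lyapunov_apply hX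
  have hsolve (i j : ι) := lyapunov_entry_system_solution (hω i) (hω j) hα
    (h i j).1 (h i j).2.1 (h i j).2.2.1 (h i j).2.2.2
  ext (i | i) (j | j)
  exacts [(hsolve i j).1, (hsolve i j).2.1, (hsolve i j).2.2.1, (hsolve i j).2.2.2]

end DampedOscillator

theorem fromRows_zero_mul_transpose {m n κ R : Type*} [Fintype κ] [Semiring R]
    (B : Matrix n κ R) :
    fromRows (0 : Matrix m κ R) B * (fromRows (0 : Matrix m κ R) B)ᵀ =
      fromBlocks 0 0 0 (B * Bᵀ) := by
  rw [transpose_fromRows, fromRows_mul_fromCols]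
  simp

theorem lyapunov_solution_tendsto_zero (n m : ℕ) (ω : Fin n → ℝ) (hω : ∀ i, 0 < ω i)
    (B₂ : Matrix (Fin n) (Fin m) ℝ) :
    let Atilde : ℝ → Matrix (Fin n ⊕ Fin n) (Fin n ⊕ Fin n) ℝ := fun α =>
      Matrix.fromBlocks 0 (Matrix.diagonal ω) (-(Matrix.diagonal ω))
        (-(α • Matrix.diagonal ω))
    let B : Matrix (Fin n ⊕ Fin n) (Fin m) ℝ := Matrix.fromRows 0 B₂
    (∀ α : ℝ, 0 < α → (Atilde α).IsStable) ∧
    ∀ X : ℝ → Matrix (Fin n ⊕ Fin n) (Fin n ⊕ Fin n) ℝ,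
      (∀ α : ℝ, 0 < α → Atilde α * X α + X α * (Atilde α)ᵀ = -(B * Bᵀ)) →
      Tendsto X atTop (nhds 0) := by
  intro Atilde B
  refine ⟨fun α hα => dampedOscillatorMatrix_isStable hω hα, fun X hX => ?_⟩
  refine (tendsto_dampedOscillatorLyapunovSolution_atTop hω (B₂ * B₂ᵀ)).congr' ?_
  filter_upwards [eventually_gt_atTop 0] with α hα
  refine (eq_dampedOscillatorLyapunovSolution hω hα ?_).symm
  rw [← fromRows_zero_mul_transpose]
  exact hX α hα
end

section
/- Let A ∈ ℝ^{N×N} be stable, B ∈ ℝ^{N×m}, C ∈ ℝ^{q×N}, and let X be the unique solution of the Lyapunov equation AX + XAᵀ = −BBᵀ. If Tr(CᵀC · X) = 0, then C·exp(At)·B = 0 for all t ≥ 0; in particular CB = 0. -/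
open Matrix

/-! Let `h t = tr (Cᵀ C e^{tA} X e^{tAᵀ})`. By the Lyapunov equation
`h' t = -‖C e^{tA} B‖²` (Frobenius norm), so `h` is antitone. Now `h 0 = 0` by hypothesis and
`h t → 0` because stability forces `e^{tA} → 0`, so `h` vanishes on `[0, ∞)`, and hence so does
its derivative. The decay of `e^{tA}` is checked on generalized eigenvectors `v` of the
complexified matrix, for which `e^{tA} v = e^{tμ} p(t)` with `p` a vector polynomial and
`re μ < 0`. -/

open Filter Topology NormedSpace Finset Set
open scoped Nat

attribute [local instance] Matrix.linftyOpNormedRing Matrix.linftyOpNormedAlgebra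

lemma Complex.tendsto_exp_mul_mul_pow_atTop_nhds_zero {μ : ℂ} (hμ : μ.re < 0) (j : ℕ) :
    Tendsto (fun t : ℝ => Complex.exp (t * μ) * (t : ℂ) ^ j) atTop (𝓝 0) := by
  rw [tendsto_zero_iff_norm_tendsto_zero]
  refine (tendsto_rpow_mul_exp_neg_mul_atTop_nhds_zero j (-μ.re) (by linarith)).congr' ?_
  filter_upwards [eventually_ge_atTop 0] with t ht
  rw [norm_mul, norm_pow, Complex.norm_exp, Complex.norm_real, Real.norm_of_nonneg ht,
    Real.rpow_natCast, Complex.re_ofReal_mul]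
  ring_nf

variable {n : Type*} [Fintype n] [DecidableEq n]

lemma Matrix.exp_mulVec_eq_sum_of_pow_mulVec_eq_zero {𝕂 : Type*} [RCLike 𝕂] (N : Matrix n n 𝕂)
    {k : ℕ} {v : n → 𝕂} (hv : N ^ k *ᵥ v = 0) :
    exp N *ᵥ v = ∑ j ∈ range k, (j !⁻¹ : 𝕂) • (N ^ j *ᵥ v) := by
  have hseries := ((expSeries_summable' (𝕂 := 𝕂) N).hasSum.map
    (mulVec.addMonoidHomLeft v) (continuous_id.matrix_mulVec continuous_const))
  rw [exp_eq_tsum (𝕂 := 𝕂)]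
  refine hseries.unique (hasSum_sum_of_ne_finset_zero fun j hj => ?_) |>.trans
    (sum_congr rfl fun j _ => smul_mulVec _ _ _)
  have hjk : k ≤ j := by simpa using hj
  change ((j !⁻¹ : 𝕂) • N ^ j) *ᵥ v = 0
  rw [smul_mulVec, ← pow_sub_mul_pow N hjk, ← mulVec_mulVec, hv, mulVec_zero, smul_zero]

lemma Matrix.exp_smul_eq_exp_mul_smul_exp_smul_sub (K : Matrix n n ℂ) (μ t : ℂ) :
    exp (t • K) = Complex.exp (t * μ) • exp (t • (K - μ • 1)) := by
  have hcomm : Commute ((t * μ) • (1 : Matrix n n ℂ)) (t • (K - μ • 1)) :=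
    ((Commute.one_left _).smul_left _).smul_right _
  have hscalar : exp (algebraMap ℂ (Matrix n n ℂ) (t * μ)) = Complex.exp (t * μ) • 1 := by
    rw [Complex.exp_eq_exp_ℂ, ← Algebra.algebraMap_eq_smul_one]
    exact (algebraMap_exp_comm (t * μ)).symm
  rw [show t • K = (t * μ) • (1 : Matrix n n ℂ) + t • (K - μ • 1) by
      rw [smul_sub, mul_smul]; abel,
    exp_add_of_commute _ _ hcomm, ← Algebra.algebraMap_eq_smul_one, hscalar, smul_mul_assoc,
    one_mul]

lemma Matrix.tendsto_exp_smul_mulVec_of_pow_sub_smul_mulVec_eq_zero (K : Matrix n n ℂ) {μ : ℂ}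
    (hμ : μ.re < 0) {k : ℕ} {v : n → ℂ} (hv : (K - μ • 1) ^ k *ᵥ v = 0) :
    Tendsto (fun t : ℝ => exp ((t : ℂ) • K) *ᵥ v) atTop (𝓝 0) := by
  have hexpand : ∀ t : ℝ, exp ((t : ℂ) • K) *ᵥ v = ∑ j ∈ range k,
      (Complex.exp (t * μ) * (t : ℂ) ^ j) • ((j !⁻¹ : ℂ) • ((K - μ • 1) ^ j *ᵥ v)) := by
    intro t
    have htv : ((t : ℂ) • (K - μ • 1)) ^ k *ᵥ v = 0 := by rw [smul_pow, smul_mulVec, hv, smul_zero]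
    rw [exp_smul_eq_exp_mul_smul_exp_smul_sub K μ, smul_mulVec,
      exp_mulVec_eq_sum_of_pow_mulVec_eq_zero _ htv, smul_sum]
    refine sum_congr rfl fun j _ => ?_
    rw [smul_pow, smul_mulVec, smul_smul, smul_smul, smul_smul]
    ring_nf
  simp_rw [hexpand]
  simpa using tendsto_finsetSum (range k) fun j _ =>
    (Complex.tendsto_exp_mul_mul_pow_atTop_nhds_zero hμ j).smul_const
      ((j !⁻¹ : ℂ) • ((K - μ • 1) ^ j *ᵥ v))

lemma Matrix.tendsto_exp_smul_mulVec_atTop_nhds_zero (K : Matrix n n ℂ)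
    (hK : ∀ z ∈ spectrum ℂ K, z.re < 0) (v : n → ℂ) :
    Tendsto (fun t : ℝ => exp ((t : ℂ) • K) *ᵥ v) atTop (𝓝 0) := by
  have hv : v ∈ ⨆ μ, Module.End.maxGenEigenspace (toLin' K) μ := by
    rw [Module.End.iSup_maxGenEigenspace_eq_top]; exact Submodule.mem_top
  induction hv using Submodule.iSup_induction' with
  | mem μ w hw =>
    obtain rfl | hw0 := eq_or_ne w 0
    · simp
    obtain ⟨k, hk⟩ := (Module.End.mem_maxGenEigenspace _ _ _).mp hw
    have hμ : μ ∈ spectrum ℂ K := by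
      have hgen : Module.End.HasUnifEigenvalue (toLin' K) μ ⊤ :=
        (Submodule.ne_bot_iff _).mpr ⟨w, hw, hw0⟩
      simpa [spectrum_toLin'] using (hgen.lt zero_lt_one).mem_spectrum
    refine tendsto_exp_smul_mulVec_of_pow_sub_smul_mulVec_eq_zero K (hK μ hμ) (k := k) ?_
    rwa [← toLin'_apply, toLin'_pow, map_sub, map_smul, toLin'_one]
  | zero => simp
  | add x y _ _ hx hy => simpa [mulVec_add] using hx.add hy

lemma Matrix.tendsto_exp_smul_atTop_nhds_zero (K : Matrix n n ℂ)
    (hK : ∀ z ∈ spectrum ℂ K, z.re < 0) :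
    Tendsto (fun t : ℝ => exp ((t : ℂ) • K)) atTop (𝓝 0) := by
  refine tendsto_pi_nhds.mpr fun i => tendsto_pi_nhds.mpr fun j => ?_
  simpa [mulVec_single_one] using
    tendsto_pi_nhds.mp (tendsto_exp_smul_mulVec_atTop_nhds_zero K hK (Pi.single j 1)) i

lemma Matrix.IsStable.tendsto_exp_smul_atTop_nhds_zero {A : Matrix n n ℝ} (hA : A.IsStable) :
    Tendsto (fun t : ℝ => exp (t • A)) atTop (𝓝 0) := by
  have hcomplex (t : ℝ) :
      (exp (t • A)).map Complex.ofReal = exp ((t : ℂ) • A.map Complex.ofReal) := by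
    have hsmul : Complex.ofRealHom.mapMatrix (t • A) = (t : ℂ) • A.map Complex.ofReal := by
      ext; simp
    rw [← hsmul]
    exact map_exp (Complex.ofRealHom.mapMatrix : Matrix n n ℝ →+* Matrix n n ℂ)
      (continuous_id.matrix_map Complex.continuous_ofReal) (t • A)
  have hre := ((continuous_id.matrix_map Complex.continuous_re).tendsto 0).comp
    (Matrix.tendsto_exp_smul_atTop_nhds_zero _ hA)
  refine (hre.congr fun t => ?_).trans (by simp)
  rw [Function.comp_apply, id, ← hcomplex, Matrix.map_map]
  ext; simp

lemma HasDerivAt.matrix_trace {𝕜 : Type*} [RCLike 𝕜] {f : 𝕜 → Matrix n n 𝕜}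
    {f' : Matrix n n 𝕜} {t : 𝕜} (hf : HasDerivAt f f' t) :
    HasDerivAt (fun s => trace (f s)) (trace f') t :=
  (traceLinearMap n 𝕜 𝕜).toContinuousLinearMap.hasFDerivAt.comp_hasDerivAt t hf

lemma Matrix.hasDerivAt_trace_mul_exp_smul_mul_mul_transpose {A X W Q : Matrix n n ℝ}
    (hX : A * X + X * Aᵀ = -W) (t : ℝ) :
    HasDerivAt (fun s : ℝ => trace (Q * (exp (s • A) * X * (exp (s • A))ᵀ)))
      (-trace (Q * (exp (t • A) * W * (exp (t • A))ᵀ))) t := by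
  have hE : HasDerivAt (fun s : ℝ => exp (s • A)) (exp (t • A) * A) t :=
    hasDerivAt_exp_smul_const A t
  have hEt : HasDerivAt (fun s : ℝ => (exp (s • A))ᵀ) (Aᵀ * (exp (t • A))ᵀ) t := by
    have hT (s : ℝ) : (exp (s • A))ᵀ = exp (s • Aᵀ) := by rw [← exp_transpose, transpose_smul]
    simp only [hT]
    exact hasDerivAt_exp_smul_const' Aᵀ t
  refine (((hE.mul_const X).mul hEt).const_mul Q).matrix_trace.congr_deriv ?_
  rw [← neg_neg W, ← hX]
  simp only [neg_mul, mul_neg, trace_neg, neg_neg, mul_add, add_mul, mul_assoc]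

lemma HasDerivAt.eq_zero_of_eqOn_Ici {F : Type*} [NormedAddCommGroup F] [NormedSpace ℝ F]
    {f : ℝ → F} {f' c : F} {t : ℝ} (hf : HasDerivAt f f' t) (hc : EqOn f (fun _ => c) (Ici t)) :
    f' = 0 :=
  (uniqueDiffWithinAt_Ici t).eq_deriv _ hf.hasDerivWithinAt
    ((hasDerivWithinAt_const t _ c).congr hc (hc self_mem_Ici))

theorem trace_zero_implies_zero_response (N m q : ℕ)
    (A : Matrix (Fin N) (Fin N) ℝ) (hA : A.IsStable)
    (B : Matrix (Fin N) (Fin m) ℝ) (C : Matrix (Fin q) (Fin N) ℝ)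
    (X : Matrix (Fin N) (Fin N) ℝ)
    (hX : A * X + X * Aᵀ = -(B * Bᵀ))
    (htr : Matrix.trace (Cᵀ * C * X) = 0) :
    (∀ t : ℝ, 0 ≤ t → C * NormedSpace.exp (t • A) * B = 0) ∧ C * B = 0 := by
  set M : ℝ → Matrix (Fin q) (Fin m) ℝ := fun t => C * exp (t • A) * B
  set h : ℝ → ℝ := fun t => trace (Cᵀ * C * (exp (t • A) * X * (exp (t • A))ᵀ))
  have hderiv (t : ℝ) : HasDerivAt h (-trace (M t * (M t)ᵀ)) t := by
    convert hasDerivAt_trace_mul_exp_smul_mul_mul_transpose hX t using 2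
    rw [Matrix.mul_assoc Cᵀ, trace_mul_comm Cᵀ]
    simp only [M, transpose_mul, Matrix.mul_assoc]
  have h0 : h 0 = 0 := by simpa [h] using htr
  have hlim : Tendsto h atTop (𝓝 0) := by
    have hcont : Continuous fun E : Matrix (Fin N) (Fin N) ℝ => trace (Cᵀ * C * (E * X * Eᵀ)) := by
      fun_prop
    have := (hcont.tendsto 0).comp hA.tendsto_exp_smul_atTop_nhds_zero
    rwa [zero_mul, zero_mul, mul_zero, trace_zero] at this
  have hanti : Antitone h := antitone_of_hasDerivAt_nonpos hderiv fun t =>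
    neg_nonpos.mpr (by simpa using (posSemidef_self_mul_conjTranspose (M t)).trace_nonneg)
  have hvanish : EqOn h (fun _ => 0) (Ici 0) := fun t ht =>
    le_antisymm (h0 ▸ hanti ht) (hanti.le_of_tendsto hlim t)
  have hM (t : ℝ) (ht : 0 ≤ t) : M t = 0 := by
    have := (hderiv t).eq_zero_of_eqOn_Ici (hvanish.mono (Ici_subset_Ici.mpr ht))
    exact trace_mul_conjTranspose_self_eq_zero_iff.mp (by simpa using this)
  exact ⟨hM, by simpa [M] using hM 0 le_rfl⟩
end

section
/- Let A ∈ ℝ^{N×N} be stable and C ∈ ℝ^{q×N}. Then the integral X = ∫₀^∞ exp(Aᵀt)·CᵀC·exp(At) dt converges, X is symmetric positive semidefinite, and X satisfies the Lyapunov equation AᵀX + XA = −CᵀC. -/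
/-!
Factor the characteristic polynomial of the complexified matrix `B` as `∏ (X - z)` with
`Re z < 0`. By Cayley–Hamilton, peeling off one factor at a time, each
`M * ∏ (B - z) * exp (t • B)` solves `g' = z • g + h` with `h` already exponentially decaying,
so by variation of constants `exp (t • A)` decays exponentially. Then
`F t = exp (t • Aᵀ) * Cᵀ * C * exp (t • A)` is integrable on `(0, ∞)`, tends to `0` and satisfies
`F' = Aᵀ * F + F * A`, so integrating gives `Aᵀ * X + X * A = 0 - F 0 = -(Cᵀ * C)`.
Each `F t = (C * exp (t • A))ᵀ * (C * exp (t • A))` is positive semidefinite, hence so is `X`.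
-/

open Matrix MeasureTheory

attribute [local instance] Matrix.normedAddCommGroup Matrix.normedSpace

open Filter Topology Asymptotics NormedSpace

theorem exists_norm_le_exp_of_hasDerivAt_smul_add {E : Type*} [NormedAddCommGroup E]
    [NormedSpace ℂ E] {g h : ℝ → E} {z : ℂ} {δ c : ℝ}
    (hδ : δ < -z.re) (hg : ∀ t, HasDerivAt g (z • g t + h t) t)
    (hh : ∀ t ≥ 0, ‖h t‖ ≤ c * Real.exp (-δ * t)) :
    ∃ C, ∀ t ≥ 0, ‖g t‖ ≤ C * Real.exp (-δ * t) := by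
  set a := -z.re
  have hc : 0 ≤ c := by simpa using (norm_nonneg _).trans (hh 0 le_rfl)
  have hw : ∀ t : ℝ, HasDerivAt (fun s : ℝ => Complex.exp (-z * s) • g s)
      (Complex.exp (-z * t) • h t) t := by
    intro t
    have he : HasDerivAt (fun s : ℝ => Complex.exp (-z * s)) (Complex.exp (-z * t) * -z) t := by
      simpa using ((hasDerivAt_id (t : ℂ)).const_mul (-z)).cexp.comp_ofReal
    refine (he.smul (hg t)).congr_deriv ?_
    rw [mul_neg, neg_smul, smul_add, smul_smul]
    abel
  have hnorm : ∀ t : ℝ, ‖Complex.exp (-z * t)‖ = Real.exp (a * t) := fun t => by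
    simp [Complex.norm_exp, a]
  -- `‖(exp (-z t) • g)'‖ ≤ c e^{(a - δ) t}`, which is the derivative of `B`.
  set B : ℝ → ℝ := fun t => ‖g 0‖ + c / (a - δ) * Real.exp ((a - δ) * t)
  have hB : ∀ t, HasDerivAt B (c * Real.exp ((a - δ) * t)) t := fun t => by
    have := (((hasDerivAt_id' t).const_mul (a - δ)).exp.const_mul (c / (a - δ))).const_add ‖g 0‖
    refine this.congr_deriv ?_
    field_simp [(sub_pos.2 hδ).ne']
  have hwB : ∀ t ≥ (0 : ℝ), ‖Complex.exp (-z * t) • g t‖ ≤ B t := fun t ht =>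
    image_norm_le_of_norm_deriv_right_le_deriv_boundary
      (fun x _ => (hw x).continuousAt.continuousWithinAt) (fun x _ => (hw x).hasDerivWithinAt)
      (by simp [B]; positivity) hB
      (fun x hx => by
        rw [norm_smul, hnorm]
        calc Real.exp (a * x) * ‖h x‖ ≤ Real.exp (a * x) * (c * Real.exp (-δ * x)) := by
              gcongr; exact hh x hx.1
          _ = c * Real.exp ((a - δ) * x) := by rw [mul_left_comm, ← Real.exp_add]; ring_nf)
      ⟨ht, le_rfl⟩
  refine ⟨‖g 0‖ + c / (a - δ), fun t ht => ?_⟩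
  have hdecay : Real.exp (-a * t) ≤ Real.exp (-δ * t) := by gcongr
  calc ‖g t‖ = Real.exp (-a * t) * ‖Complex.exp (-z * t) • g t‖ := by
        rw [norm_smul, hnorm, ← mul_assoc, ← Real.exp_add]; simp
    _ ≤ Real.exp (-a * t) * B t := by gcongr; exact hwB t ht
    _ ≤ (‖g 0‖ + c / (a - δ)) * Real.exp (-δ * t) := by
        have hexp : Real.exp (-a * t) * Real.exp ((a - δ) * t) = Real.exp (-δ * t) := by
          rw [← Real.exp_add]; ring_nf
        have hK : 0 ≤ c / (a - δ) := div_nonneg hc (sub_pos.2 hδ).le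
        nlinarith [norm_nonneg (g 0)]

section ComplexBanachAlgebra

open Polynomial

variable {𝔸 : Type*} [NormedRing 𝔸] [NormedAlgebra ℂ 𝔸] [CompleteSpace 𝔸]

theorem exists_norm_mul_exp_smul_le_of_mul_aeval_eq_zero (b : 𝔸) {δ : ℝ} (s : Multiset ℂ)
    (hs : ∀ z ∈ s, δ < -z.re) (m : 𝔸) (hm : m * aeval b (s.map fun z => X - C z).prod = 0) :
    ∃ K, ∀ t ≥ (0 : ℝ), ‖m * exp (t • b)‖ ≤ K * Real.exp (-δ * t) := by
  induction s using Multiset.induction_on generalizing m with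
  | empty => exact ⟨0, fun t _ => by simp_all⟩
  | cons z s ih =>
    obtain ⟨K, hK⟩ := ih (fun w hw => hs w (Multiset.mem_cons_of_mem hw))
      (m * (b - algebraMap ℂ 𝔸 z)) (by simpa [mul_assoc] using hm)
    -- `m * exp (t • b)` solves `g' = z • g + h` with `h t = m * (b - z) * exp (t • b)`.
    refine exists_norm_le_exp_of_hasDerivAt_smul_add (hs z (Multiset.mem_cons_self _ _))
      (fun t => ?_) hK
    refine ((hasDerivAt_exp_smul_const' (𝕂 := ℝ) b t).const_mul m).congr_deriv ?_
    simp only [mul_sub, sub_mul, Algebra.algebraMap_eq_smul_one, mul_smul_comm, smul_mul_assoc,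
      mul_one, ← mul_assoc]
    abel

theorem exists_isBigO_exp_smul_of_aeval_eq_zero (b : 𝔸) {p : ℂ[X]} (hp : p.Monic)
    (hb : aeval b p = 0) (hroots : ∀ z ∈ p.roots, z.re < 0) :
    ∃ δ > 0, (fun t : ℝ => exp (t • b)) =O[atTop] fun t => Real.exp (-δ * t) := by
  obtain ⟨δ, hδroots, hδ⟩ : ∃ δ, (∀ z ∈ p.roots.toFinset, δ < -z.re) ∧ 0 < δ := by
    have h : ∀ᶠ δ in 𝓝 (0 : ℝ), ∀ z ∈ p.roots.toFinset, δ < -z.re :=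
      (Filter.eventually_all_finset _).2 fun z hz =>
        eventually_lt_nhds (neg_pos.2 (hroots z (Multiset.mem_toFinset.1 hz)))
    exact ((h.filter_mono nhdsWithin_le_nhds).and (self_mem_nhdsWithin (s := Set.Ioi 0))).exists
  have hsplit := (IsAlgClosed.splits p).eq_prod_roots_of_monic hp
  obtain ⟨K, hK⟩ := exists_norm_mul_exp_smul_le_of_mul_aeval_eq_zero b p.roots
    (fun z hz => hδroots z (Multiset.mem_toFinset.2 hz)) 1 (by rw [← hsplit, hb, mul_zero])
  refine ⟨δ, hδ, IsBigO.of_bound K (eventually_atTop.2 ⟨0, fun t ht => ?_⟩)⟩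
  simpa [abs_of_pos (Real.exp_pos _)] using hK t ht

end ComplexBanachAlgebra

theorem integrableOn_Ioi_of_isBigO_exp_neg {E : Type*} [NormedAddCommGroup E] {f : ℝ → E}
    {δ : ℝ} (hδ : 0 < δ) (hf : Continuous f)
    (ho : f =O[atTop] fun t => Real.exp (-δ * t)) : IntegrableOn f (Set.Ioi 0) :=
  (integrable_norm_iff hf.aestronglyMeasurable).1
    (integrable_of_isBigO_exp_neg hδ hf.norm.continuousOn ho.norm_left)

theorem tendsto_zero_of_isBigO_exp_neg {E : Type*} [NormedAddCommGroup E] {f : ℝ → E}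
    {δ : ℝ} (hδ : 0 < δ) (ho : f =O[atTop] fun t => Real.exp (-δ * t)) :
    Tendsto f atTop (𝓝 0) :=
  ho.trans_tendsto <| Real.tendsto_exp_atBot.comp <|
    tendsto_id.const_mul_atTop_of_neg (neg_neg_of_pos hδ)

theorem ContinuousLinearMap.map_integral_Ioi_eq_neg_of_hasDerivAt {E : Type*}
    [NormedAddCommGroup E] [NormedSpace ℝ E] [CompleteSpace E] (L : E →L[ℝ] E) {f : ℝ → E}
    (hf : ∀ t ≥ 0, HasDerivAt f (L (f t)) t) (hint : IntegrableOn f (Set.Ioi 0))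
    (hlim : Tendsto f atTop (𝓝 0)) :
    L (∫ t in Set.Ioi 0, f t) = -f 0 := by
  rw [← L.integral_comp_comm hint,
    integral_Ioi_of_hasDerivAt_of_tendsto' hf (L.integrable_comp hint) hlim,
    zero_sub]

section RealBanachAlgebra

variable {𝔸 : Type*} [NormedRing 𝔸] [NormedAlgebra ℝ 𝔸]

theorem isBigO_exp_smul_mul_mul_exp_smul {a b : 𝔸} {δ₁ δ₂ : ℝ}
    (ha : (fun t : ℝ => exp (t • a)) =O[atTop] fun t => Real.exp (-δ₁ * t))
    (hb : (fun t : ℝ => exp (t • b)) =O[atTop] fun t => Real.exp (-δ₂ * t)) (d : 𝔸) :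
    (fun t : ℝ => exp (t • a) * d * exp (t • b)) =O[atTop]
      fun t => Real.exp (-(δ₁ + δ₂) * t) := by
  refine ((ha.mul (isBigO_const_const d one_ne_zero atTop)).mul hb).congr_right fun t => ?_
  rw [mul_one, ← Real.exp_add]
  ring_nf

variable [CompleteSpace 𝔸]

theorem hasDerivAt_exp_smul_mul_mul_exp_smul (a b d : 𝔸) (t : ℝ) :
    HasDerivAt (fun s : ℝ => exp (s • a) * d * exp (s • b))
      (a * (exp (t • a) * d * exp (t • b)) + exp (t • a) * d * exp (t • b) * b) t := by
  refine (((hasDerivAt_exp_smul_const' a t).mul_const d).mul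
    (hasDerivAt_exp_smul_const b t)).congr_deriv ?_
  simp only [mul_assoc]

theorem integrableOn_exp_smul_mul_mul_exp_smul_and_sylvester {a b : 𝔸} {δ₁ δ₂ : ℝ}
    (hδ₁ : 0 < δ₁) (hδ₂ : 0 < δ₂)
    (ha : (fun t : ℝ => exp (t • a)) =O[atTop] fun t => Real.exp (-δ₁ * t))
    (hb : (fun t : ℝ => exp (t • b)) =O[atTop] fun t => Real.exp (-δ₂ * t)) (d : 𝔸) :
    IntegrableOn (fun t : ℝ => exp (t • a) * d * exp (t • b)) (Set.Ioi 0) ∧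
      a * (∫ t in Set.Ioi (0 : ℝ), exp (t • a) * d * exp (t • b))
        + (∫ t in Set.Ioi (0 : ℝ), exp (t • a) * d * exp (t • b)) * b = -d := by
  have hδ : 0 < δ₁ + δ₂ := add_pos hδ₁ hδ₂
  have ho := isBigO_exp_smul_mul_mul_exp_smul ha hb d
  have hderiv := hasDerivAt_exp_smul_mul_mul_exp_smul a b d
  have hint := integrableOn_Ioi_of_isBigO_exp_neg hδ
    (continuous_iff_continuousAt.2 fun t => (hderiv t).continuousAt) ho
  refine ⟨hint, ?_⟩
  let L : 𝔸 →L[ℝ] 𝔸 := ContinuousLinearMap.mul ℝ 𝔸 a + (ContinuousLinearMap.mul ℝ 𝔸).flip b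
  simpa [L] using L.map_integral_Ioi_eq_neg_of_hasDerivAt (fun t _ => hderiv t) hint
    (tendsto_zero_of_isBigO_exp_neg hδ ho)

end RealBanachAlgebra

namespace Matrix

variable {n : Type*} [Fintype n]

-- Instance search does not find `ContinuousENorm` for the sup norm, whose topology is not
-- syntactically the product topology of `Matrix`; hence the explicit instance.
theorem PosSemidef.integral {α : Type*} [MeasurableSpace α] {μ : Measure α}
    {F : α → Matrix n n ℝ} (hF : @Integrable _ _ SeminormedAddGroup.toContinuousENorm _ _ F μ)
    (hpos : ∀ᵐ x ∂μ, (F x).PosSemidef) : (∫ x, F x ∂μ).PosSemidef := by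
  refine .of_dotProduct_mulVec_nonneg ?_ fun v => ?_
  · let T := (transposeLinearEquiv n n ℝ ℝ).toContinuousLinearEquiv
    rw [IsHermitian, conjTranspose_eq_transpose_of_trivial]
    calc (∫ x, F x ∂μ)ᵀ = ∫ x, (F x)ᵀ ∂μ := (T.integral_comp_comm F).symm
      _ = ∫ x, F x ∂μ := integral_congr_ae <| hpos.mono fun x hx => hx.1.eq
  · let Q : Matrix n n ℝ →ₗ[ℝ] ℝ :=
      { toFun := fun M => star v ⬝ᵥ M *ᵥ v
        map_add' := fun M N => by simp [add_mulVec, dotProduct_add]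
        map_smul' := fun c M => by simp [smul_mulVec, dotProduct_smul] }
    have hQ : ∫ x, star v ⬝ᵥ F x *ᵥ v ∂μ = star v ⬝ᵥ (∫ x, F x ∂μ) *ᵥ v :=
      (LinearMap.toContinuousLinearMap Q).integral_comp_comm hF
    rw [← hQ]
    exact integral_nonneg_of_ae (hpos.mono fun x hx => hx.dotProduct_mulVec_nonneg v)

variable [DecidableEq n]

/-- The entrywise sup norm on matrices is not submultiplicative; the analysis is carried out in
the Banach algebra of operators on Euclidean space and transported back along this equivalence. -/
noncomputable def toEuclideanCLE (𝕜 : Type*) [RCLike 𝕜] :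
    Matrix n n 𝕜 ≃L[𝕜] (EuclideanSpace 𝕜 n →L[𝕜] EuclideanSpace 𝕜 n) :=
  (toEuclideanCLM (n := n) (𝕜 := 𝕜)).toAlgEquiv.toLinearEquiv.toContinuousLinearEquiv

@[simp]
theorem coe_toEuclideanCLE (𝕜 : Type*) [RCLike 𝕜] :
    ⇑(toEuclideanCLE (n := n) 𝕜) = toEuclideanCLM (n := n) (𝕜 := 𝕜) :=
  rfl

@[simp]
theorem toEuclideanCLM_toEuclideanCLE_symm {𝕜 : Type*} [RCLike 𝕜]
    (x : EuclideanSpace 𝕜 n →L[𝕜] EuclideanSpace 𝕜 n) :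
    toEuclideanCLM (n := n) (𝕜 := 𝕜) ((toEuclideanCLE 𝕜).symm x) = x :=
  (toEuclideanCLE 𝕜).apply_symm_apply x

theorem toEuclideanCLM_exp {𝕜 : Type*} [RCLike 𝕜] (M : Matrix n n 𝕜) :
    toEuclideanCLM (n := n) (𝕜 := 𝕜) (exp M) = exp (toEuclideanCLM (n := n) (𝕜 := 𝕜) M) := by
  open scoped Matrix.Norms.Operator in
  exact NormedSpace.map_exp (toEuclideanCLM (n := n) (𝕜 := 𝕜))
    (toEuclideanCLE (n := n) 𝕜).continuous M

theorem exp_map_ofReal (M : Matrix n n ℝ) :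
    exp (M.map Complex.ofReal) = (exp M).map Complex.ofReal := by
  open scoped Matrix.Norms.Operator in
  exact (NormedSpace.map_exp Complex.ofRealHom.mapMatrix
    (continuous_id.matrix_map Complex.continuous_ofReal) M).symm

theorem exp_smul_toEuclideanCLM {𝕜 : Type*} [RCLike 𝕜] (M : Matrix n n 𝕜) (t : ℝ) :
    exp (t • toEuclideanCLM (n := n) (𝕜 := 𝕜) M)
      = toEuclideanCLM (n := n) (𝕜 := 𝕜) (exp (t • M)) := by
  rw [toEuclideanCLM_exp]
  exact congrArg exp
    ((toEuclideanCLM (n := n) (𝕜 := 𝕜)).toAlgEquiv.toLinearMap.map_smul_of_tower t M).symm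

theorem exists_isBigO_exp_smul_of_forall_re_neg (B : Matrix n n ℂ)
    (hB : ∀ z ∈ spectrum ℂ B, z.re < 0) :
    ∃ δ > 0, (fun t : ℝ => exp (t • B)) =O[atTop] fun t => Real.exp (-δ * t) := by
  let e := toEuclideanCLE (n := n) ℂ
  have hCH : Polynomial.aeval (e B) B.charpoly = 0 := by
    simpa [e, aeval_self_charpoly] using Polynomial.aeval_algHom_apply
      (toEuclideanCLM (n := n) (𝕜 := ℂ)).toAlgEquiv.toAlgHom B B.charpoly
  obtain ⟨δ, hδ, h⟩ := exists_isBigO_exp_smul_of_aeval_eq_zero (e B) B.charpoly_monic hCH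
    (fun z hz => hB z (mem_spectrum_of_isRoot_charpoly (Polynomial.isRoot_of_mem_roots hz)))
  refine ⟨δ, hδ, IsBigO.trans ?_ h⟩
  refine (e.symm.toContinuousLinearMap.isBigO_comp _ _).congr_left fun t => ?_
  exact (congrArg e.symm (exp_smul_toEuclideanCLM B t)).trans (e.symm_apply_apply _)

theorem IsStable.exists_isBigO_exp_smul {A : Matrix n n ℝ} (hA : A.IsStable) :
    ∃ δ > 0, (fun t : ℝ => exp (t • A)) =O[atTop] fun t => Real.exp (-δ * t) := by
  obtain ⟨δ, hδ, h⟩ := exists_isBigO_exp_smul_of_forall_re_neg _ hA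
  refine ⟨δ, hδ, (isBigO_of_le _ fun t => ?_).trans h⟩
  have hmap : (t • A).map Complex.ofReal = t • A.map Complex.ofReal := by ext; simp
  rw [← hmap, exp_map_ofReal, norm_map_eq _ _ Complex.norm_real]

theorem integrableOn_exp_smul_mul_mul_exp_smul_and_sylvester {A₁ A₂ : Matrix n n ℝ}
    {δ₁ δ₂ : ℝ} (hδ₁ : 0 < δ₁) (hδ₂ : 0 < δ₂)
    (h₁ : (fun t : ℝ => exp (t • A₁)) =O[atTop] fun t => Real.exp (-δ₁ * t))
    (h₂ : (fun t : ℝ => exp (t • A₂)) =O[atTop] fun t => Real.exp (-δ₂ * t))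
    (D : Matrix n n ℝ) :
    @IntegrableOn _ _ _ _ SeminormedAddGroup.toContinuousENorm
        (fun t : ℝ => exp (t • A₁) * D * exp (t • A₂)) (Set.Ioi 0) volume ∧
      A₁ * (∫ t in Set.Ioi (0 : ℝ), exp (t • A₁) * D * exp (t • A₂))
        + (∫ t in Set.Ioi (0 : ℝ), exp (t • A₁) * D * exp (t • A₂)) * A₂ = -D := by
  let e := toEuclideanCLE (n := n) ℝ
  have hdecay : ∀ {A : Matrix n n ℝ} {δ : ℝ},
      (fun t : ℝ => exp (t • A)) =O[atTop] (fun t => Real.exp (-δ * t)) →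
      (fun t : ℝ => exp (t • e A)) =O[atTop] (fun t => Real.exp (-δ * t)) :=
    fun h => ((e.toContinuousLinearMap.isBigO_comp _ _).congr_left
      fun t => (exp_smul_toEuclideanCLM _ t).symm).trans h
  obtain ⟨hint, hsyl⟩ := _root_.integrableOn_exp_smul_mul_mul_exp_smul_and_sylvester hδ₁ hδ₂
    (hdecay h₁) (hdecay h₂) (e D)
  have hF : ∀ t : ℝ, exp (t • A₁) * D * exp (t • A₂)
      = e.symm (exp (t • e A₁) * e D * exp (t • e A₂)) := fun t => by
    apply e.injective
    simp [e, exp_smul_toEuclideanCLM]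
  simp only [hF]
  refine ⟨e.symm.toContinuousLinearMap.integrable_comp hint, ?_⟩
  have hX : ∫ t in Set.Ioi (0 : ℝ), e.symm (exp (t • e A₁) * e D * exp (t • e A₂))
      = e.symm (∫ t in Set.Ioi (0 : ℝ), exp (t • e A₁) * e D * exp (t • e A₂)) :=
    e.symm.integral_comp_comm _
  rw [hX]
  apply e.injective
  simpa [e] using hsyl

end Matrix

theorem observability_gramian_integral (N q : ℕ)
    (A : Matrix (Fin N) (Fin N) ℝ) (hA : A.IsStable)
    (C : Matrix (Fin q) (Fin N) ℝ) :
    let f : ℝ → Matrix (Fin N) (Fin N) ℝ := fun t =>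
      NormedSpace.exp (t • Aᵀ) * (Cᵀ * C) * NormedSpace.exp (t • A)
    -- the integral converges
    @IntegrableOn _ _ _ _ SeminormedAddGroup.toContinuousENorm f (Set.Ioi (0 : ℝ)) volume ∧
    -- X is symmetric positive semidefinite and solves the Lyapunov equation
    ∀ X : Matrix (Fin N) (Fin N) ℝ, X = ∫ t in Set.Ioi (0 : ℝ), f t →
      X.PosSemidef ∧ Aᵀ * X + X * A = -(Cᵀ * C) := by
  intro f
  obtain ⟨δ, hδ, hexp⟩ := hA.exists_isBigO_exp_smul
  have hexpT : (fun t : ℝ => exp (t • Aᵀ)) =O[atTop] fun t => Real.exp (-δ * t) :=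
    (isBigO_of_le _ fun t => by rw [← transpose_smul, exp_transpose, norm_transpose]).trans hexp
  obtain ⟨hint, hsyl⟩ :=
    integrableOn_exp_smul_mul_mul_exp_smul_and_sylvester hδ hδ hexpT hexp (Cᵀ * C)
  refine ⟨hint, fun X hX => ⟨hX ▸ PosSemidef.integral hint (ae_of_all _ fun t => ?_), hX ▸ hsyl⟩⟩
  simpa [f, conjTranspose_eq_transpose_of_trivial, ← exp_transpose, transpose_smul] using
    (posSemidef_conjTranspose_mul_self C).conjTranspose_mul_mul_same (exp (t • A))
end
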